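/- arXiv:1904.11635 — 3 statements merged into one kernel-verified Lean document; each statement's English description precedes it below -/
import Mathlib

section
/- If C = a_1⋯a_j (all a_i arrows of Δ) is an α-revived cycle, written C = ab with paths a, b of positive length, ā, b̄ ≠ 0 in A and α(ā,b̄) ≠ 0, then j = s, C = x_i x_{i+1} ⋯ x_{i+s−1} for some i ∈ {1,…,s}, and α(ā,b̄)(1_A) = k. -/
noncomputable section
open Classical

/-- A quiver, given by a type of vertices and a family of types of arrows. -/
structure QD : Type 1 where
  V : Type
  Ar : V → V → Type

namespace QD

variable {Q : QD}

/-- Oriented paths in a quiver, composed from left to right. -/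
inductive Path (Q : QD) : Q.V → Q.V → Type
  | nil (i : Q.V) : Path Q i i
  | cons {i j k : Q.V} (a : Q.Ar i j) (p : Path Q j k) : Path Q i k

namespace Path

/-- Concatenation of paths. -/
def comp : {i j k : Q.V} → Path Q i j → Path Q j k → Path Q i k
  | _, _, _, nil _, q => q
  | _, _, _, cons a p, q => cons a (comp p q)

/-- Length of a path. -/
def length : {i j : Q.V} → Path Q i j → ℕ
  | _, _, nil _ => 0
  | _, _, cons _ p => length p + 1

end Path

/-- A path bundled with its endpoints. -/
def PathIn (Q : QD) : Type := Σ i : Q.V, Σ j : Q.V, Path Q i j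

/-- Bundle a path with its endpoints. -/
def Path.sig {i j : Q.V} (p : Path Q i j) : PathIn Q := ⟨i, j, p⟩

/-- The arrow `a` occurs in the path `p`. -/
def Path.arrowMem {i j : Q.V} (a : Q.Ar i j) : {u v : Q.V} → Path Q u v → Prop
  | _, _, Path.nil _ => False
  | _, _, @Path.cons _ u u' _ b p =>
      (⟨u, u', b⟩ : Σ i : Q.V, Σ j : Q.V, Q.Ar i j) = ⟨i, j, a⟩ ∨ Path.arrowMem a p

end QD

/-- The path algebra of a quiver over a field `K`, described axiomatically:
an algebra with a basis indexed by the paths, multiplying by concatenation. -/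
structure PathAlg (K : Type) [Field K] (Q : QD) [Fintype Q.V] where
  P : Type
  [ringP : Ring P]
  [algP : Algebra K P]
  ι : {i j : Q.V} → Q.Path i j → P
  ι_comp : ∀ {i j k : Q.V} (p : Q.Path i j) (q : Q.Path j k), ι (p.comp q) = ι p * ι q
  ι_ortho : ∀ {i j k l : Q.V} (p : Q.Path i j) (q : Q.Path k l), j ≠ k → ι p * ι q = 0
  sum_nil : (∑ i : Q.V, ι (QD.Path.nil i)) = 1
  li : LinearIndependent K (fun p : QD.PathIn Q => ι p.2.2)
  span_top : Submodule.span K (Set.range (fun p : QD.PathIn Q => ι p.2.2)) = ⊤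

attribute [instance] PathAlg.ringP PathAlg.algP

section Main

variable (K : Type) [Field K] (Q : QD) [Fintype Q.V] [∀ i j : Q.V, Fintype (Q.Ar i j)]
variable (n : ℕ) (PA : PathAlg K Q)

/-- The relation whose `RingQuot` is the truncated quiver algebra `KΔ/R_Δ^n`:
identify with `0` the image of every path of length at least `n`. -/
def truncRel : PA.P → PA.P → Prop := fun u v =>
  v = 0 ∧ ∃ p : QD.PathIn Q, n ≤ p.2.2.length ∧ u = PA.ι p.2.2

/-- The truncated quiver algebra `A = KΔ/R_Δ^n`. -/
abbrev TA : Type := RingQuot (truncRel K Q n PA)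

/-- The class in `A = KΔ/R_Δ^n` of a path of `Δ`. -/
def cls {i j : Q.V} (p : Q.Path i j) : TA K Q n PA :=
  RingQuot.mkAlgHom K (truncRel K Q n PA) (PA.ι p)

/-- Index type for the canonical basis of the truncated algebra: paths of length `< n`. -/
abbrev Short : Type := {p : QD.PathIn Q // p.2.2.length < n}

/-- The Jacobson radical of the truncated algebra. -/
def JradA : Ideal (TA K Q n PA) := Ideal.jacobson ⊥

/-- The socle of `A` as an `A`-bimodule: the two-sided annihilator of the radical,
viewed as a `K`-subspace. -/
def socA : Submodule K (TA K Q n PA) where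
  carrier := {z | ∀ r ∈ JradA K Q n PA, r * z = 0 ∧ z * r = 0}
  add_mem' := by
    intro a b ha hb r hr
    exact ⟨by rw [mul_add, (ha r hr).1, (hb r hr).1, add_zero],
      by rw [add_mul, (ha r hr).2, (hb r hr).2, add_zero]⟩
  zero_mem' := by intro r hr; simp
  smul_mem' := by
    intro c z hz r hr
    exact ⟨by rw [Algebra.mul_smul_comm, (hz r hr).1, smul_zero],
      by rw [Algebra.smul_mul_assoc, (hz r hr).2, smul_zero]⟩

variable (basA : Module.Basis (Short Q n) K (TA K Q n PA))

/-- The dual-basis functional `p̄^*` attached to a path `p` (zero if `p` is long). -/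
def coordP (p : QD.PathIn Q) : Module.Dual K (TA K Q n PA) :=
  if h : p.2.2.length < n then basA.coord ⟨p, h⟩ else 0

variable (s : ℕ) [NeZero s] (w : ZMod s → Q.V) (x : ∀ i : ZMod s, Q.Ar (w i) (w (i + 1)))

/-- The segment `x_i x_{i+1} ⋯ x_{i+m-1}` of the fixed basic cycle `γ = x_1 ⋯ x_s`. -/
def seg : (i : ZMod s) → (m : ℕ) → Q.Path (w i) (w (i + (m : ZMod s)))
  | i, 0 => cast (congrArg (fun v : ZMod s => Q.Path (w i) (w v)) (by push_cast; ring))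
      (QD.Path.nil (w i))
  | i, m + 1 => cast (congrArg (fun v : ZMod s => Q.Path (w i) (w v)) (by push_cast; ring))
      (QD.Path.cons (x i) (seg (i + 1) m))

variable (k : K)

/-- The value `α_r(ā, b̄)` of the `r`-th summand of the `2`-cocycle attached to `γ`. -/
def aTerm {i j l : Q.V} (a : Q.Path i j) (b : Q.Path j l) (r : ZMod s) :
    Module.Dual K (TA K Q n PA) :=
  if (cls K Q n PA a ≠ 0 ∧ cls K Q n PA b ≠ 0 ∧ n ≤ (a.comp b).length ∧ (a.comp b).length < s ∧
      (a.comp b).sig = (seg Q s w x r (a.comp b).length).sig) then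
    coordP K Q n PA basA
      ((seg Q s w x (r + ((a.comp b).length : ZMod s)) (s - (a.comp b).length)).sig)
  else if (cls K Q n PA a ≠ 0 ∧ cls K Q n PA b ≠ 0 ∧ (a.comp b).length = s ∧
      (a.comp b).sig = (seg Q s w x r s).sig) then
    coordP K Q n PA basA ((QD.Path.nil (w r)).sig)
  else 0

variable (αm : TA K Q n PA →ₗ[K] TA K Q n PA →ₗ[K] Module.Dual K (TA K Q n PA))
variable (t : ℕ) (pM : Fin t → QD.PathIn Q)

/-- The ordinary quiver of the Hochschild extension algebra: the quiver `Δ` together with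
one extra arrow `y_{p_m} : t(p_m) → s(p_m)` for every `m`. -/
abbrev Qe : QD where
  V := Q.V
  Ar := fun i j => Q.Ar i j ⊕ {m : Fin t // (pM m).2.1 = i ∧ (pM m).1 = j}

/-- The inclusion of paths of `Δ` into paths of the extended quiver. -/
def embed : {i j : Q.V} → Q.Path i j → (Qe Q t pM).Path i j
  | _, _, QD.Path.nil i => QD.Path.nil (Q := Qe Q t pM) i
  | _, _, QD.Path.cons a p => QD.Path.cons (Q := Qe Q t pM) (Sum.inl a) (embed p)

/-- The number of `y`-arrows occurring in a path of the extended quiver. -/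
def numY : {i j : Q.V} → (Qe Q t pM).Path i j → ℕ
  | _, _, QD.Path.nil _ => 0
  | i, _, @QD.Path.cons _ _ j' _ a p =>
      (match (a : Q.Ar i j' ⊕ {m : Fin t // (pM m).2.1 = i ∧ (pM m).1 = j'}) with
        | Sum.inl _ => 0
        | Sum.inr _ => 1) + numY p

/-- The arrow `y_{p_m}` of the extended quiver. -/
def yArr (m : Fin t) : (Qe Q t pM).Ar (pM m).2.1 (pM m).1 := Sum.inr ⟨m, rfl, rfl⟩

/-- `C` is an `α`-revived cycle of `Δ`. -/
def IsRev {h : Q.V} (C : Q.Path h h) : Prop :=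
  ∃ (j : Q.V) (a : Q.Path h j) (b : Q.Path j h),
    0 < a.length ∧ 0 < b.length ∧ cls K Q n PA a ≠ 0 ∧ cls K Q n PA b ≠ 0 ∧
    C = a.comp b ∧ αm (cls K Q n PA a) (cls K Q n PA b) ≠ 0

/-- `C` is an `α`-revived cycle, viewed inside the extended quiver. -/
def IsRevE {h : Q.V} (C : (Qe Q t pM).Path h h) : Prop :=
  ∃ C₀ : Q.Path h h, C = embed Q t pM C₀ ∧ IsRev K Q n PA αm C₀

/-- `C` is an elementary cycle of weight `wt`. -/
def IsElemW {h : Q.V} (C : (Qe Q t pM).Path h h) (wt : K) : Prop :=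
  ∃ (m : Fin t) (δ₂ : Q.Path h (pM m).2.1) (δ₁ : Q.Path (pM m).1 h),
    C = (embed Q t pM δ₂).comp (QD.Path.cons (yArr Q t pM m) (embed Q t pM δ₁)) ∧
    coordP K Q n PA basA (pM m) (cls K Q n PA (δ₁.comp δ₂)) = wt ∧ wt ≠ 0

/-- `C` is an elementary cycle. -/
def IsElem {h : Q.V} (C : (Qe Q t pM).Path h h) : Prop :=
  ∃ wt : K, IsElemW K Q n PA basA t pM C wt

/-- `C` is a nonzero cycle (elementary or `α`-revived) with weight `wt`. -/
def HasWt {h : Q.V} (C : (Qe Q t pM).Path h h) (wt : K) : Prop :=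
  IsElemW K Q n PA basA t pM C wt ∨ (IsRevE K Q n PA αm t pM C ∧ wt = k)

/-- The left action of `A` on `D(A) = Hom_K(A, K)`: `(a · f)(z) = f(z * a)`. -/
def dL (a : TA K Q n PA) (f : Module.Dual K (TA K Q n PA)) : Module.Dual K (TA K Q n PA) :=
  f ∘ₗ LinearMap.mulRight K a

/-- The right action of `A` on `D(A) = Hom_K(A, K)`: `(f · b)(z) = f(b * z)`. -/
def dR (f : Module.Dual K (TA K Q n PA)) (b : TA K Q n PA) : Module.Dual K (TA K Q n PA) :=
  f ∘ₗ LinearMap.mulLeft K b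

variable (T : Type) [Ring T] [Algebra K T]
variable (eT : T ≃ₗ[K] TA K Q n PA × Module.Dual K (TA K Q n PA))
variable (PB : PathAlg K (Qe Q t pM))
variable (Φm : PB.P →ₐ[K] T)

/-- `φ₁ = π₁ ∘ Φ`. -/
def ph1 (z : PB.P) : TA K Q n PA := (eT (Φm z)).1

/-- `φ₂ = π₂ ∘ Φ`. -/
def ph2 (z : PB.P) : Module.Dual K (TA K Q n PA) := (eT (Φm z)).2

/-- The primitive idempotent of `T` corresponding to a vertex. -/
def eV (i : Q.V) : T := eT.symm (cls K Q n PA (QD.Path.nil i), 0)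

end Main

section Extra

variable (K : Type) [Field K] (Q : QD) [Fintype Q.V] [∀ i j : Q.V, Fintype (Q.Ar i j)]
variable (n : ℕ) (PA : PathAlg K Q)
variable (t : ℕ) (pM : Fin t → QD.PathIn Q)
variable (T : Type) [Ring T] [Algebra K T]
variable (PB : PathAlg K (Qe Q t pM))
variable (Φm : PB.P →ₐ[K] T)

/-- The Jacobson radical of a ring. -/
def JT : Ideal T := Ideal.jacobson ⊥

/-- The Jacobson radical, viewed as a `K`-subspace. -/
def JTK : Submodule K T := Submodule.restrictScalars K (JT T)

/-- The square of the Jacobson radical, as a `K`-subspace. -/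
def J2K : Submodule K T := JTK K T * JTK K T

/-- The number of arrows `i → j` in the Gabriel (ordinary) quiver of `T`,
i.e. `dim_K e_i (rad T / rad² T) e_j`. -/
def gabrielCount (ei ej : T) : ℕ :=
  Module.finrank K
      ↥(Submodule.span K {y : T | ∃ z ∈ JT T, y = ei * z * ej} ⊔ J2K K T)
    - Module.finrank K ↥(J2K K T)

/-- `e` is a primitive idempotent. -/
def IsPrimIdem (e : T) : Prop :=
  e * e = e ∧ e ≠ 0 ∧
  ∀ f g : T, f * f = f → g * g = g → f * g = 0 → g * f = 0 → e = f + g → f = 0 ∨ g = 0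

/-- `a` is an arrow of the ring `T` in the sense of Brenner:
`a ∈ rad T \ rad² T` and `a = x a y` for primitive idempotents `x, y`. -/
def IsArrowT (a : T) : Prop :=
  a ∈ JT T ∧ a ∉ J2K K T ∧
  ∃ e f : T, IsPrimIdem T e ∧ IsPrimIdem T f ∧ a = e * a * f

/-- `rad (T e)`, a left submodule. -/
def radLe (e : T) : Submodule T T := Submodule.span T ((fun z => z * e) '' (JT T : Set T))

/-- `rad (e T)`, a right submodule. -/
def radRe (e : T) : Submodule Tᵐᵒᵖ T := Submodule.span Tᵐᵒᵖ ((fun z => e * z) '' (JT T : Set T))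

/-- `Λ` is a complete set of arrows for `rad (T e)`. -/
def CompleteL (e : T) (Λ : Set T) : Prop :=
  (∀ a ∈ Λ, IsArrowT K T a) ∧ Submodule.span T Λ = radLe T e ∧
  ∀ Λ' ⊂ Λ, Submodule.span T Λ' ≠ radLe T e

/-- `Γ` is a complete set of arrows for `rad (e T)`. -/
def CompleteR (e : T) (Γ : Set T) : Prop :=
  (∀ a ∈ Γ, IsArrowT K T a) ∧ Submodule.span Tᵐᵒᵖ Γ = radRe T e ∧
  ∀ Γ' ⊂ Γ, Submodule.span Tᵐᵒᵖ Γ' ≠ radRe T e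

/-- `(N, nn) ∈ 𝒩` in the sense of Brenner, for the primitive idempotent `e`. -/
def mcN (e : T) (N nn : ℕ) : Prop :=
  ∃ Λ Γ : Fin (nn + 1) → Set T,
    (∀ i : Fin (nn + 1), (i : ℕ) ≠ 0 → (Λ i).Nonempty ∧ (Γ i).Nonempty) ∧
    (∀ i j : Fin (nn + 1), i ≠ j → Λ i ∩ Λ j = ∅ ∧ Γ i ∩ Γ j = ∅) ∧
    CompleteL K T e (⋃ i, Λ i) ∧ CompleteR K T e (⋃ i, Γ i) ∧
    (∀ i j : Fin (nn + 1), (i ≠ j ∨ (i : ℕ) = 0 ∨ (j : ℕ) = 0) →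
      ∀ a ∈ Λ i, ∀ b ∈ Γ j, a * b = 0) ∧
    N = nn + (Λ 0).ncard

/-- The set `𝒞_h` of oriented cycles at `h` of the extended quiver that are
nonzero in the Hochschild extension algebra. -/
def Ch (h : Q.V) : Type :=
  {C : (Qe Q t pM).Path h h // 0 < C.length ∧ Φm (PB.ι C) ≠ 0}

/-- The relation `ℛ` on `𝒞_h`: the two cycles share an arrow which starts or ends at `h`. -/
def Rc (h : Q.V) (C C' : Ch K Q t pM T PB Φm h) : Prop :=
  ∃ (u v : Q.V) (a : (Qe Q t pM).Ar u v), (u = h ∨ v = h) ∧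
    QD.Path.arrowMem a C.1 ∧ QD.Path.arrowMem a C'.1

/-- `card (𝒞_h / ≡)`, the number of equivalence classes of `𝒞_h` under the equivalence
relation generated by `ℛ`. -/
def NCh (h : Q.V) : ℕ := Nat.card (Quot (Rc K Q t pM T PB Φm h))

/-- The set `𝒜_h` of arrows of the extended quiver ending at `h`. -/
def Ah (h : Q.V) : Type := Σ u : Q.V, (Qe Q t pM).Ar u h

/-- The relation `ℛ'` on `𝒜_h`: there is an arrow `b` with `ab ≠ 0 ≠ a'b` in `T_α(A)`. -/
def Ra (h : Q.V) (a a' : Ah Q t pM h) : Prop :=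
  ∃ (v : Q.V) (b : (Qe Q t pM).Ar h v),
    Φm (PB.ι (QD.Path.cons a.2 (QD.Path.cons b (QD.Path.nil (Q := Qe Q t pM) v)))) ≠ 0 ∧
    Φm (PB.ι (QD.Path.cons a'.2 (QD.Path.cons b (QD.Path.nil (Q := Qe Q t pM) v)))) ≠ 0

/-- `card (𝒜_h / ≈)`. -/
def NAh (h : Q.V) : ℕ := Nat.card (Quot (Ra K Q t pM T PB Φm h))

end Extra

/-- An `R`-module is indecomposable if it is nonzero and is not the internal direct
sum of two nonzero submodules. -/
def Indec (R M : Type) [Ring R] [AddCommGroup M] [Module R M] : Prop :=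
  (⊥ : Submodule R M) ≠ ⊤ ∧ ∀ p q : Submodule R M, IsCompl p q → p = ⊥ ∨ q = ⊥



section MyHelpers

theorem my_comp_length {Q : QD} : ∀ {i j l : Q.V} (p : Q.Path i j) (q : Q.Path j l),
    (p.comp q).length = p.length + q.length
  | _, _, _, QD.Path.nil _, q => by
      simp [QD.Path.comp, QD.Path.length]
  | _, _, _, QD.Path.cons a p, q => by
      simp [QD.Path.comp, QD.Path.length, my_comp_length p q]; ring

theorem my_length_cast_target {Q : QD} {i j j' : Q.V} (e : j = j') (p : Q.Path i j) :
    (cast (congrArg (Q.Path i) e) p).length = p.length := by subst e; rfl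

theorem my_length_cast_w {Q : QD} {s : ℕ} (w : ZMod s → Q.V) {i : Q.V} {v v' : ZMod s}
    (e : v = v') (p : Q.Path i (w v)) :
    (cast (congrArg (fun u : ZMod s => Q.Path i (w u)) e) p).length = p.length := by
  subst e; rfl

theorem my_seg_length {Q : QD} {s : ℕ} [NeZero s]
    (w : ZMod s → Q.V) (x : ∀ i : ZMod s, Q.Ar (w i) (w (i + 1))) :
    ∀ (m : ℕ) (i : ZMod s), (seg Q s w x i m).length = m
  | 0, i => by
      rw [seg,
        my_length_cast_w w (show (i : ZMod s) = i + ((0 : ℕ) : ZMod s) by push_cast; ring)]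
      rfl
  | m + 1, i => by
      rw [seg,
        my_length_cast_w w
          (show i + 1 + ((m : ℕ) : ZMod s) = i + (((m + 1 : ℕ)) : ZMod s) by push_cast; ring)]
      show (seg Q s w x (i + 1) m).length + 1 = m + 1
      rw [my_seg_length w x m (i + 1)]

theorem my_cast_sub_self (s m : ℕ) (hm : m ≤ s) :
    ((s - m : ℕ) : ZMod s) = - (m : ZMod s) := by
  rw [Nat.cast_sub hm, ZMod.natCast_self, zero_sub]

theorem my_noShort (K : Type) [Field K] (Q : QD) [Fintype Q.V] (n : ℕ) (PA : PathAlg K Q)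
    (basA : Module.Basis (Short Q n) K (TA K Q n PA))
    (hcyc : ∀ (i : Q.V) (p : Q.Path i i), 0 < p.length → cls K Q n PA p = 0)
    (hbas : ∀ sp : Short Q n, basA sp = cls K Q n PA sp.1.2.2)
    (s : ℕ) [NeZero s] (w : ZMod s → Q.V) (x : ∀ i : ZMod s, Q.Ar (w i) (w (i + 1)))
    (r : ZMod s) (m : ℕ) (h0 : 0 < m) (hmn : m < n)
    (hw : w (r + (m : ZMod s)) = w r) : False := by
  set p : Q.Path (w r) (w r) := cast (congrArg (Q.Path (w r)) hw) (seg Q s w x r m) with hp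
  have hlen : p.length = m := by
    rw [hp, my_length_cast_target hw, my_seg_length]
  have h1 : cls K Q n PA p = 0 := hcyc _ p (by rw [hlen]; exact h0)
  have h2 : basA ⟨⟨w r, w r, p⟩, by rw [hlen]; exact hmn⟩ = cls K Q n PA p := hbas _
  exact basA.ne_zero _ (h2.trans h1)

theorem my_one_eq_sum (K : Type) [Field K] (Q : QD) [Fintype Q.V] (n : ℕ) (PA : PathAlg K Q) :
    (1 : TA K Q n PA) = ∑ i : Q.V, cls K Q n PA (QD.Path.nil i) := by
  simp only [cls]
  rw [← map_sum, PA.sum_nil, map_one]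

theorem my_coord_nil_one (K : Type) [Field K] (Q : QD) [Fintype Q.V] (n : ℕ)
    (PA : PathAlg K Q) (basA : Module.Basis (Short Q n) K (TA K Q n PA))
    (hbas : ∀ sp : Short Q n, basA sp = cls K Q n PA sp.1.2.2)
    (hn : 0 < n) (v : Q.V) :
    coordP K Q n PA basA ((QD.Path.nil (Q := Q) v).sig) 1 = 1 := by
  have h0 : ((QD.Path.nil (Q := Q) v).sig).2.2.length < n := hn
  rw [coordP, dif_pos h0]
  set idx : Short Q n := ⟨(QD.Path.nil (Q := Q) v).sig, h0⟩ with hidx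
  rw [my_one_eq_sum K Q n PA, map_sum]
  have hterm : ∀ i : Q.V,
      basA.coord idx (cls K Q n PA (QD.Path.nil i)) = if i = v then 1 else 0 := by
    intro i
    have hi : (QD.Path.nil (Q := Q) i).length < n := hn
    have hb : cls K Q n PA (QD.Path.nil i)
        = basA ⟨(QD.Path.nil (Q := Q) i).sig, hi⟩ :=
      (hbas ⟨(QD.Path.nil (Q := Q) i).sig, hi⟩).symm
    rw [hb, Module.Basis.coord_apply, Module.Basis.repr_self, Finsupp.single_apply]
    by_cases hiv : i = v
    · subst hiv
      rw [if_pos rfl, if_pos rfl]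
    · rw [if_neg hiv, if_neg]
      intro he
      exact hiv (congrArg (fun z : Short Q n => z.1.1) he)
  rw [Finset.sum_congr rfl (fun i _ => hterm i)]
  simp

end MyHelpers

section Statements

variable (K : Type) [Field K] (Q : QD) [Fintype Q.V] [∀ i j : Q.V, Fintype (Q.Ar i j)]
variable (n : ℕ) (PA : PathAlg K Q)
variable (basA : Module.Basis (Short Q n) K (TA K Q n PA))
variable (s : ℕ) [NeZero s] (w : ZMod s → Q.V) (x : ∀ i : ZMod s, Q.Ar (w i) (w (i + 1)))
variable (k : K)
variable (αm : TA K Q n PA →ₗ[K] TA K Q n PA →ₗ[K] Module.Dual K (TA K Q n PA))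
variable (t : ℕ) (pM : Fin t → QD.PathIn Q)
variable (T : Type) [Ring T] [Algebra K T]
variable (eT : T ≃ₗ[K] TA K Q n PA × Module.Dual K (TA K Q n PA))
variable (PB : PathAlg K (Qe Q t pM))
variable (Φm : PB.P →ₐ[K] T)

/-- if `C = ab` is an `α`-revived cycle, then `C` has length `s`, `C` is a
rotation `x_i ⋯ x_{i+s-1}` of the cycle `γ`, and `α(ā, b̄)(1_A) = k`. -/
theorem stmt12
    [IsAlgClosed K]
    (hn : 2 ≤ n)
    (hdim : 1 < Module.finrank K (TA K Q n PA))
    (hconn : ∀ i j : Q.V,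
      Relation.EqvGen (fun u v : Q.V => Nonempty (Q.Ar u v) ∨ Nonempty (Q.Ar v u)) i j)
    (hcyc : ∀ (i : Q.V) (p : Q.Path i i), 0 < p.length → cls K Q n PA p = 0)
    (hbas : ∀ sp : Short Q n, basA sp = cls K Q n PA sp.1.2.2)
    (hs1 : n + 1 ≤ s) (hs2 : s ≤ 2 * n - 2)
    (hk : k ≠ 0)
    (hα : ∀ {i j l : Q.V} (a : Q.Path i j) (b : Q.Path j l),
      αm (cls K Q n PA a) (cls K Q n PA b) =
        k • ∑ r : ZMod s, aTerm K Q n PA basA s w x a b r)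
    (hcoc : ∀ a b c : TA K Q n PA,
      dL K Q n PA a (αm b c) + αm a (b * c) = αm (a * b) c + dR K Q n PA (αm a b) c)
    (hMlt : ∀ m : Fin t, (pM m).2.2.length < n)
    (hMli : LinearIndependent K fun m : Fin t => cls K Q n PA (pM m).2.2)
    (hMsp : Submodule.span K (Set.range fun m : Fin t => cls K Q n PA (pM m).2.2)
      = socA K Q n PA)
    (hTmul : ∀ u v : T, eT (u * v) = ((eT u).1 * (eT v).1,
      dL K Q n PA (eT u).1 (eT v).2 + dR K Q n PA (eT u).2 (eT v).1 + αm (eT u).1 (eT v).1))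
    (hTone : eT 1 = (1, 0))
    (hΦnil : ∀ i : Q.V, Φm (PB.ι (QD.Path.nil (Q := Qe Q t pM) i))
      = eT.symm (cls K Q n PA (QD.Path.nil i), 0))
    (hΦarr : ∀ {i j : Q.V} (a : Q.Ar i j),
      Φm (PB.ι (QD.Path.cons (Sum.inl a) (QD.Path.nil (Q := Qe Q t pM) j)))
      = eT.symm (cls K Q n PA (QD.Path.cons a (QD.Path.nil j)), 0))
    (hΦy : ∀ m : Fin t,
      Φm (PB.ι (QD.Path.cons (yArr Q t pM m) (QD.Path.nil (Q := Qe Q t pM) (pM m).1)))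
      = eT.symm (0, coordP K Q n PA basA (pM m)))
    (hΦsurj : Function.Surjective Φm)
    {h j : Q.V} (C : Q.Path h h) (a : Q.Path h j) (b : Q.Path j h)
    (ha : 0 < a.length) (hb : 0 < b.length)
    (ha0 : cls K Q n PA a ≠ 0) (hb0 : cls K Q n PA b ≠ 0)
    (hab : C = a.comp b)
    (hα0 : αm (cls K Q n PA a) (cls K Q n PA b) ≠ 0) :
    C.length = s ∧ (∃ r : ZMod s, C.sig = (seg Q s w x r s).sig) ∧
    αm (cls K Q n PA a) (cls K Q n PA b) 1 = k := by
  have key := hα a b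
  have hc1 : ∀ r : ZMod s, ¬ (cls K Q n PA a ≠ 0 ∧ cls K Q n PA b ≠ 0 ∧
      n ≤ (a.comp b).length ∧ (a.comp b).length < s ∧
      (a.comp b).sig = (seg Q s w x r (a.comp b).length).sig) := by
    rintro r ⟨-, -, hnm, hms, hsig⟩
    set m := (a.comp b).length with hm
    have h1 : h = w r := congrArg (fun z : QD.PathIn Q => z.1) hsig
    have h2 : h = w (r + (m : ZMod s)) := congrArg (fun z : QD.PathIn Q => z.2.1) hsig
    refine my_noShort K Q n PA basA hcyc hbas s w x (r + (m : ZMod s)) (s - m)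
      (by omega) (by omega) ?_
    rw [my_cast_sub_self s m (le_of_lt hms)]
    have he : r + (m : ZMod s) + -(m : ZMod s) = r := by ring
    rw [he, ← h1, ← h2]
  have hc2 : ∀ r : ZMod s, aTerm K Q n PA basA s w x a b r ≠ 0 →
      ((a.comp b).length = s ∧ (a.comp b).sig = (seg Q s w x r s).sig) := by
    intro r hne
    rw [aTerm, if_neg (hc1 r)] at hne
    by_cases hcond : (cls K Q n PA a ≠ 0 ∧ cls K Q n PA b ≠ 0 ∧ (a.comp b).length = s ∧
        (a.comp b).sig = (seg Q s w x r s).sig)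
    · exact ⟨hcond.2.2.1, hcond.2.2.2⟩
    · rw [if_neg hcond] at hne
      exact absurd rfl hne
  have hsum : (∑ r : ZMod s, aTerm K Q n PA basA s w x a b r) ≠ 0 := by
    intro h0
    rw [key, h0, smul_zero] at hα0
    exact hα0 rfl
  obtain ⟨r₀, -, hr₀⟩ := Finset.exists_ne_zero_of_sum_ne_zero hsum
  obtain ⟨hlenS, hsigS⟩ := hc2 r₀ hr₀
  have hr0v : h = w r₀ := congrArg (fun z : QD.PathIn Q => z.1) hsigS
  have huniq : ∀ r : ZMod s, r ≠ r₀ → aTerm K Q n PA basA s w x a b r = 0 := by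
    intro r hne
    by_contra hne0
    obtain ⟨-, hsigR⟩ := hc2 r hne0
    have hrv : h = w r := congrArg (fun z : QD.PathIn Q => z.1) hsigR
    set p := (r₀ - r).val with hpdef
    have hp0 : p ≠ 0 := by
      rw [hpdef, Ne, ZMod.val_eq_zero, sub_eq_zero]
      exact fun e => hne e.symm
    have hps : p < s := ZMod.val_lt _
    have hcast : ((p : ℕ) : ZMod s) = r₀ - r := ZMod.natCast_zmod_val _
    by_cases hpn : p < n
    · refine my_noShort K Q n PA basA hcyc hbas s w x r p (Nat.pos_of_ne_zero hp0) hpn ?_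
      rw [hcast]
      have he : r + (r₀ - r) = r₀ := by ring
      rw [he, ← hr0v, ← hrv]
    · refine my_noShort K Q n PA basA hcyc hbas s w x r₀ (s - p) (by omega) (by omega) ?_
      rw [my_cast_sub_self s p (le_of_lt hps), hcast]
      have he : r₀ + -(r₀ - r) = r := by ring
      rw [he, ← hr0v, ← hrv]
  have hsum_eq : (∑ r : ZMod s, aTerm K Q n PA basA s w x a b r)
      = aTerm K Q n PA basA s w x a b r₀ :=
    Finset.sum_eq_single r₀ (fun r _ hr => huniq r hr)
      (fun hm => absurd (Finset.mem_univ r₀) hm)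
  have hval : aTerm K Q n PA basA s w x a b r₀
      = coordP K Q n PA basA ((QD.Path.nil (w r₀)).sig) := by
    rw [aTerm, if_neg (hc1 r₀), if_pos ⟨ha0, hb0, hlenS, hsigS⟩]
  refine ⟨by rw [hab]; exact hlenS, ⟨r₀, by rw [hab]; exact hsigS⟩, ?_⟩
  rw [key, hsum_eq, hval, LinearMap.smul_apply,
    my_coord_nil_one K Q n PA basA hbas (by omega) (w r₀)]
  simp


end Statements
end
end

section
/- Every path in KΔ_{T_α(A)} that is nonzero in T_α(A) is contained in an oriented cycle of Δ_{T_α(A)} that is nonzero in T_α(A). -/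
noncomputable section
open Classical

section Statements

variable (K : Type) [Field K] (Q : QD) [Fintype Q.V] [∀ i j : Q.V, Fintype (Q.Ar i j)]
variable (n : ℕ) (PA : PathAlg K Q)
variable (basA : Module.Basis (Short Q n) K (TA K Q n PA))
variable (s : ℕ) [NeZero s] (w : ZMod s → Q.V) (x : ∀ i : ZMod s, Q.Ar (w i) (w (i + 1)))
variable (k : K)
variable (αm : TA K Q n PA →ₗ[K] TA K Q n PA →ₗ[K] Module.Dual K (TA K Q n PA))
variable (t : ℕ) (pM : Fin t → QD.PathIn Q)
variable (T : Type) [Ring T] [Algebra K T]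
variable (eT : T ≃ₗ[K] TA K Q n PA × Module.Dual K (TA K Q n PA))
variable (PB : PathAlg K (Qe Q t pM))
variable (Φm : PB.P →ₐ[K] T)

set_option linter.unusedSectionVars false

theorem aux_comp_nil {i j : Q.V} (p : Q.Path i j) : p.comp (QD.Path.nil j) = p := by
  induction p with
  | nil => rfl
  | cons a p ih => simp [QD.Path.comp, ih]

theorem aux_comp_assoc {i j l u : Q.V} (p : Q.Path i j) (q : Q.Path j l) (r : Q.Path l u) :
    (p.comp q).comp r = p.comp (q.comp r) := by
  induction p with
  | nil => rfl
  | cons a p ih => simp [QD.Path.comp, ih]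

theorem aux_length_comp {i j l : Q.V} (p : Q.Path i j) (q : Q.Path j l) :
    (p.comp q).length = p.length + q.length := by
  induction p with
  | nil => simp [QD.Path.comp, QD.Path.length]
  | cons a p ih => simp [QD.Path.comp, QD.Path.length, ih]; omega

theorem aux_len0 {i j : Q.V} (p : Q.Path i j) (h : p.length = 0) :
    (⟨i, j, p⟩ : QD.PathIn Q) = ⟨i, i, QD.Path.nil i⟩ := by
  cases p with
  | nil => rfl
  | cons a p => simp [QD.Path.length] at h

theorem aux_sig_inj {i j : Q.V} {p q : Q.Path i j}
    (h : (⟨i, j, p⟩ : QD.PathIn Q) = ⟨i, j, q⟩) : p = q := by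
  have h2 := (Sigma.mk.inj_iff.mp h).2
  have h3 := (Sigma.mk.inj_iff.mp (eq_of_heq h2)).2
  exact eq_of_heq h3

theorem aux_cls_comp {i j l : Q.V} (p : Q.Path i j) (q : Q.Path j l) :
    cls K Q n PA (p.comp q) = cls K Q n PA p * cls K Q n PA q := by
  unfold cls; rw [PA.ι_comp, map_mul]

theorem aux_cls_ortho {i j j' l : Q.V} (p : Q.Path i j) (q : Q.Path j' l) (h : j ≠ j') :
    cls K Q n PA p * cls K Q n PA q = 0 := by
  unfold cls; rw [← map_mul, PA.ι_ortho p q h, map_zero]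

theorem aux_cls_long {i j : Q.V} (p : Q.Path i j) (h : n ≤ p.length) :
    cls K Q n PA p = 0 := by
  unfold cls
  have : truncRel K Q n PA (PA.ι p) 0 := ⟨rfl, ⟨⟨i, j, p⟩, h, rfl⟩⟩
  rw [RingQuot.mkAlgHom_rel K this, map_zero]

theorem aux_cls_lt {i j : Q.V} (p : Q.Path i j) (h : cls K Q n PA p ≠ 0) :
    p.length < n := by
  by_contra h'
  exact h (aux_cls_long K Q n PA p (le_of_not_gt h'))

theorem aux_embed_comp {i j l : Q.V} (p : Q.Path i j) (q : Q.Path j l) :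
    embed Q t pM (p.comp q) = (embed Q t pM p).comp (embed Q t pM q) := by
  induction p with
  | nil => rfl
  | cons a p ih => simp [QD.Path.comp, embed, ih]

theorem aux_length_embed {i j : Q.V} (p : Q.Path i j) :
    (embed Q t pM p).length = p.length := by
  induction p with
  | nil => rfl
  | cons a p ih => simp [QD.Path.length, embed, ih]

theorem aux_dL_apply (a : TA K Q n PA) (f : Module.Dual K (TA K Q n PA)) (z : TA K Q n PA) :
    dL K Q n PA a f z = f (z * a) := by
  simp [dL]

theorem aux_dR_apply (b : TA K Q n PA) (f : Module.Dual K (TA K Q n PA)) (z : TA K Q n PA) :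
    dR K Q n PA f b z = f (b * z) := by
  simp [dR]

theorem aux_dL_zero (f : Module.Dual K (TA K Q n PA)) : dL K Q n PA 0 f = 0 := by
  ext z; simp [aux_dL_apply]

theorem aux_dR_zero_left (b : TA K Q n PA) : dR K Q n PA 0 b = 0 := by
  ext z; simp [aux_dR_apply]

theorem aux_dR_zero_right (f : Module.Dual K (TA K Q n PA)) : dR K Q n PA f 0 = 0 := by
  ext z; simp [aux_dR_apply]

theorem aux_coordP_basA (c : QD.PathIn Q) (hc : c.2.2.length < n) (sp : Short Q n) :
    coordP K Q n PA basA c (basA sp) = if sp = ⟨c, hc⟩ then 1 else 0 := by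
  rw [coordP, dif_pos hc, Module.Basis.coord_apply, Module.Basis.repr_self_apply]

theorem aux_coordP_long (c : QD.PathIn Q) (hc : ¬ c.2.2.length < n) :
    coordP K Q n PA basA c = 0 := by
  rw [coordP, dif_neg hc]

/-- Lemma E : invariance of `coordP c` under cutting by the idempotents of the
endpoints of `c`. -/
theorem aux_coordP_inv (hbas : ∀ sp : Short Q n, basA sp = cls K Q n PA sp.1.2.2)
    (c : QD.PathIn Q) (z : TA K Q n PA) :
    coordP K Q n PA basA c
      (cls K Q n PA (QD.Path.nil c.1) * z * cls K Q n PA (QD.Path.nil c.2.1))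
    = coordP K Q n PA basA c z := by
  by_cases hc : c.2.2.length < n
  · have key : (coordP K Q n PA basA c ∘ₗ
        (LinearMap.mulRight K (cls K Q n PA (QD.Path.nil c.2.1))) ∘ₗ
        (LinearMap.mulLeft K (cls K Q n PA (QD.Path.nil c.1))))
        = coordP K Q n PA basA c := by
      apply basA.ext
      intro sp
      obtain ⟨⟨u, v, q⟩, hq⟩ := sp
      simp only [LinearMap.comp_apply, LinearMap.mulLeft_apply, LinearMap.mulRight_apply]
      rw [hbas ⟨⟨u, v, q⟩, hq⟩]
      by_cases hu : c.1 = u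
      · by_cases hv : v = c.2.1
        · subst hu; subst hv
          have e1 : cls K Q n PA (QD.Path.nil c.1) * cls K Q n PA q = cls K Q n PA q := by
            rw [← aux_cls_comp]
            rfl
          have e2 : cls K Q n PA q * cls K Q n PA (QD.Path.nil c.2.1) = cls K Q n PA q := by
            rw [← aux_cls_comp, aux_comp_nil]
          rw [e1, e2]
        · rw [mul_assoc, aux_cls_ortho K Q n PA q (QD.Path.nil c.2.1) hv, mul_zero,
            map_zero]
          rw [← hbas ⟨⟨u, v, q⟩, hq⟩, aux_coordP_basA K Q n PA basA c hc, if_neg]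
          intro h
          have h1 := congrArg (fun sp : Short Q n => sp.1.2.1) h
          simp only at h1
          exact hv h1
      · rw [aux_cls_ortho K Q n PA (QD.Path.nil c.1) q hu, zero_mul, map_zero]
        rw [← hbas ⟨⟨u, v, q⟩, hq⟩, aux_coordP_basA K Q n PA basA c hc, if_neg]
        intro h
        have h1 := congrArg (fun sp : Short Q n => sp.1.1) h
        simp only at h1
        exact hu h1.symm
    exact congrFun (congrArg (fun f => f.toFun) key) z
  · rw [aux_coordP_long K Q n PA basA c hc]; simp

/-- Lemma D : invariance of each `aTerm` functional under cutting by the endpoint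
idempotents. -/
theorem aux_aTerm_inv (hbas : ∀ sp : Short Q n, basA sp = cls K Q n PA sp.1.2.2)
    {i j l : Q.V} (a : Q.Path i j) (b : Q.Path j l) (r : ZMod s) (z : TA K Q n PA) :
    aTerm K Q n PA basA s w x a b r
      (cls K Q n PA (QD.Path.nil l) * z * cls K Q n PA (QD.Path.nil i)) =
    aTerm K Q n PA basA s w x a b r z := by
  unfold aTerm
  split_ifs with h1 h2
  · obtain ⟨-, -, -, h4, h5⟩ := h1
    have hi : i = w r := congrArg (fun P : QD.PathIn Q => P.1) h5
    have hl : l = w (r + ((a.comp b).length : ZMod s)) :=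
      congrArg (fun P : QD.PathIn Q => P.2.1) h5
    have hzmod : r + ((a.comp b).length : ZMod s) + ((s - (a.comp b).length : ℕ) : ZMod s)
        = r := by
      rw [Nat.cast_sub (le_of_lt h4), ZMod.natCast_self]
      ring
    have hv : w (r + ((a.comp b).length : ZMod s) + ((s - (a.comp b).length : ℕ) : ZMod s))
        = w r := congrArg w hzmod
    have el := congrArg (fun v : Q.V => cls K Q n PA (QD.Path.nil v)) hl
    have ei := congrArg (fun v : Q.V => cls K Q n PA (QD.Path.nil v)) (hi.trans hv.symm)
    rw [el, ei]
    exact aux_coordP_inv K Q n PA basA hbas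
      (seg Q s w x (r + ((a.comp b).length : ZMod s)) (s - (a.comp b).length)).sig z
  · obtain ⟨-, -, -, h5⟩ := h2
    have hi : i = w r := congrArg (fun P : QD.PathIn Q => P.1) h5
    have hl : l = w (r + ((s : ℕ) : ZMod s)) := congrArg (fun P : QD.PathIn Q => P.2.1) h5
    have hzmod : r + ((s : ℕ) : ZMod s) = r := by rw [ZMod.natCast_self]; ring
    have hv : w (r + ((s : ℕ) : ZMod s)) = w r := congrArg w hzmod
    have el := congrArg (fun v : Q.V => cls K Q n PA (QD.Path.nil v)) (hl.trans hv)
    have ei := congrArg (fun v : Q.V => cls K Q n PA (QD.Path.nil v)) hi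
    rw [el, ei]
    exact aux_coordP_inv K Q n PA basA hbas (QD.Path.nil (w r)).sig z
  · simp

/-- Lemma D' : invariance of `α(ā, b̄)` under cutting by the endpoint idempotents. -/
theorem aux_alpha_inv (hbas : ∀ sp : Short Q n, basA sp = cls K Q n PA sp.1.2.2)
    (hα : ∀ {i j l : Q.V} (a : Q.Path i j) (b : Q.Path j l),
      αm (cls K Q n PA a) (cls K Q n PA b) =
        k • ∑ r : ZMod s, aTerm K Q n PA basA s w x a b r)
    {i j l : Q.V} (a : Q.Path i j) (b : Q.Path j l) (z : TA K Q n PA) :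
    αm (cls K Q n PA a) (cls K Q n PA b)
      (cls K Q n PA (QD.Path.nil l) * z * cls K Q n PA (QD.Path.nil i)) =
    αm (cls K Q n PA a) (cls K Q n PA b) z := by
  rw [hα a b]
  simp only [LinearMap.smul_apply, LinearMap.coe_sum, Finset.sum_apply, smul_eq_mul]
  congr 1
  exact Finset.sum_congr rfl fun r _ => aux_aTerm_inv K Q n PA basA s w x hbas a b r z

/-- Lemma F : the first component of the image in `T_α(A)` of a path of `Δ` is its
class in `A`. -/
theorem aux_fst
    (hTmul : ∀ u v : T, eT (u * v) = ((eT u).1 * (eT v).1,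
      dL K Q n PA (eT u).1 (eT v).2 + dR K Q n PA (eT u).2 (eT v).1 + αm (eT u).1 (eT v).1))
    (hΦnil : ∀ i : Q.V, Φm (PB.ι (QD.Path.nil (Q := Qe Q t pM) i))
      = eT.symm (cls K Q n PA (QD.Path.nil i), 0))
    (hΦarr : ∀ {i j : Q.V} (a : Q.Ar i j),
      Φm (PB.ι (QD.Path.cons (Sum.inl a) (QD.Path.nil (Q := Qe Q t pM) j)))
      = eT.symm (cls K Q n PA (QD.Path.cons a (QD.Path.nil j)), 0))
    {i j : Q.V} (p : Q.Path i j) :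
    (eT (Φm (PB.ι (embed Q t pM p)))).1 = cls K Q n PA p := by
  induction p with
  | nil i =>
    have e : embed Q t pM (QD.Path.nil i) = QD.Path.nil (Q := Qe Q t pM) i := rfl
    rw [e, hΦnil, eT.apply_symm_apply]
  | @cons u v vj a p ih =>
    have hsplit : PB.ι (embed Q t pM (QD.Path.cons a p))
        = PB.ι (QD.Path.cons (Sum.inl a) (QD.Path.nil (Q := Qe Q t pM) v))
          * PB.ι (embed Q t pM p) :=
      PB.ι_comp (QD.Path.cons (Sum.inl a) (QD.Path.nil (Q := Qe Q t pM) v))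
        (embed Q t pM p)
    rw [hsplit, map_mul, hTmul, hΦarr a, eT.apply_symm_apply,
      show QD.Path.cons a p = (QD.Path.cons a (QD.Path.nil v)).comp p from rfl,
      aux_cls_comp]
    dsimp only
    rw [ih]

/-- Lemma B : invariance of the second component of the image in `T_α(A)` of a path
of `Δ` under cutting by the endpoint idempotents. -/
theorem aux_F_inv (hbas : ∀ sp : Short Q n, basA sp = cls K Q n PA sp.1.2.2)
    (hα : ∀ {i j l : Q.V} (a : Q.Path i j) (b : Q.Path j l),
      αm (cls K Q n PA a) (cls K Q n PA b) =
        k • ∑ r : ZMod s, aTerm K Q n PA basA s w x a b r)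
    (hTmul : ∀ u v : T, eT (u * v) = ((eT u).1 * (eT v).1,
      dL K Q n PA (eT u).1 (eT v).2 + dR K Q n PA (eT u).2 (eT v).1 + αm (eT u).1 (eT v).1))
    (hΦnil : ∀ i : Q.V, Φm (PB.ι (QD.Path.nil (Q := Qe Q t pM) i))
      = eT.symm (cls K Q n PA (QD.Path.nil i), 0))
    (hΦarr : ∀ {i j : Q.V} (a : Q.Ar i j),
      Φm (PB.ι (QD.Path.cons (Sum.inl a) (QD.Path.nil (Q := Qe Q t pM) j)))
      = eT.symm (cls K Q n PA (QD.Path.cons a (QD.Path.nil j)), 0))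
    {i j : Q.V} (p : Q.Path i j) :
    ∀ z : TA K Q n PA,
      (eT (Φm (PB.ι (embed Q t pM p)))).2
        (cls K Q n PA (QD.Path.nil j) * z * cls K Q n PA (QD.Path.nil i))
      = (eT (Φm (PB.ι (embed Q t pM p)))).2 z := by
  induction p with
  | nil i =>
    intro z
    have e : embed Q t pM (QD.Path.nil i) = QD.Path.nil (Q := Qe Q t pM) i := rfl
    rw [e, hΦnil, eT.apply_symm_apply]
    simp
  | @cons u v vj a p ih =>
    intro z
    have hsplit : PB.ι (embed Q t pM (QD.Path.cons a p))
        = PB.ι (QD.Path.cons (Sum.inl a) (QD.Path.nil (Q := Qe Q t pM) v))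
          * PB.ι (embed Q t pM p) :=
      PB.ι_comp (QD.Path.cons (Sum.inl a) (QD.Path.nil (Q := Qe Q t pM) v))
        (embed Q t pM p)
    rw [hsplit, map_mul (f := Φm), hTmul, hΦarr a, eT.apply_symm_apply,
      aux_fst K Q n PA αm t pM T eT PB Φm hTmul hΦnil hΦarr p]
    dsimp only
    rw [aux_dR_zero_left K Q n PA]
    simp only [LinearMap.add_apply, LinearMap.zero_apply, add_zero,
      aux_dL_apply]
    have key1 : cls K Q n PA (QD.Path.nil u) * cls K Q n PA (QD.Path.cons a (QD.Path.nil v))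
        = cls K Q n PA (QD.Path.cons a (QD.Path.nil v)) := by
      rw [← aux_cls_comp]
      rfl
    have key2 : cls K Q n PA (QD.Path.cons a (QD.Path.nil v))
        = cls K Q n PA (QD.Path.cons a (QD.Path.nil v)) * cls K Q n PA (QD.Path.nil v) := by
      rw [← aux_cls_comp, aux_comp_nil]
    have m1 : cls K Q n PA (QD.Path.nil vj) * z * cls K Q n PA (QD.Path.nil u)
          * cls K Q n PA (QD.Path.cons a (QD.Path.nil v))
        = cls K Q n PA (QD.Path.nil vj)
          * (z * cls K Q n PA (QD.Path.cons a (QD.Path.nil v)))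
          * cls K Q n PA (QD.Path.nil v) := by
      simp only [mul_assoc]
      rw [key1, ← key2]
    rw [m1, ih (z * cls K Q n PA (QD.Path.cons a (QD.Path.nil v)))]
    rw [aux_alpha_inv K Q n PA basA s w x k αm hbas hα
      (QD.Path.cons a (QD.Path.nil v)) p z]

theorem aux_decompE {u v : (Qe Q t pM).V} (z : (Qe Q t pM).Path u v) (h : numY Q t pM z = 0) :
    ∃ p : Q.Path u v, z = embed Q t pM p := by
  induction z with
  | nil i => exact ⟨QD.Path.nil (Q := Q) i, rfl⟩
  | @cons u u' v a zp ih =>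
    rcases a with a | ym
    · have h' : numY Q t pM zp = 0 := by simpa [numY] using h
      obtain ⟨p, hp⟩ := ih h'
      exact ⟨QD.Path.cons a p, by rw [hp]; rfl⟩
    · exfalso
      simp [numY] at h

theorem aux_decompY {u v : (Qe Q t pM).V} (z : (Qe Q t pM).Path u v) (h : numY Q t pM z = 1) :
    ∃ (m : Fin t) (δ₂ : Q.Path u (pM m).2.1) (δ₁ : Q.Path (pM m).1 v),
      z = (embed Q t pM δ₂).comp
        (QD.Path.cons (yArr Q t pM m) (embed Q t pM δ₁)) := by
  induction z with
  | nil i => exfalso; simp [numY] at h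
  | @cons u u' v a zp ih =>
    rcases a with a | ym
    · have h' : numY Q t pM zp = 1 := by simpa [numY] using h
      obtain ⟨m, δ₂, δ₁, hd⟩ := ih h'
      refine ⟨m, QD.Path.cons a δ₂, δ₁, ?_⟩
      rw [hd]
      rfl
    · obtain ⟨m, hm1, hm2⟩ := ym
      subst hm1
      subst hm2
      have h' : numY Q t pM zp = 0 := by simp [numY] at h; omega
      obtain ⟨p, hp⟩ := aux_decompE Q t pM zp h'
      refine ⟨m, QD.Path.nil _, p, ?_⟩
      rw [hp]
      rfl

theorem aux_phiY
    (hTmul : ∀ u v : T, eT (u * v) = ((eT u).1 * (eT v).1,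
      dL K Q n PA (eT u).1 (eT v).2 + dR K Q n PA (eT u).2 (eT v).1 + αm (eT u).1 (eT v).1))
    (hΦy : ∀ m : Fin t,
      Φm (PB.ι (QD.Path.cons (yArr Q t pM m) (QD.Path.nil (Q := Qe Q t pM) (pM m).1)))
      = eT.symm (0, coordP K Q n PA basA (pM m)))
    {u v : (Qe Q t pM).V} (z : (Qe Q t pM).Path u v) :
    (1 ≤ numY Q t pM z → (eT (Φm (PB.ι z))).1 = 0) ∧
    (2 ≤ numY Q t pM z → Φm (PB.ι z) = 0) := by
  induction z with
  | nil i => constructor <;> (intro h; simp [numY] at h)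
  | @cons u u' v a zp ih =>
    rcases a with a | ym
    · have hsplit : PB.ι (QD.Path.cons (Sum.inl a) zp)
          = PB.ι (QD.Path.cons (Sum.inl a) (QD.Path.nil (Q := Qe Q t pM) u')) * PB.ι zp :=
        PB.ι_comp (QD.Path.cons (Sum.inl a) (QD.Path.nil (Q := Qe Q t pM) u')) zp
      constructor
      · intro h
        have h1 : 1 ≤ numY Q t pM zp := by simp [numY] at h; omega
        rw [hsplit, map_mul (f := Φm), hTmul]
        dsimp only
        rw [ih.1 h1, mul_zero]
      · intro h
        have h1 : 2 ≤ numY Q t pM zp := by simp [numY] at h; omega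
        rw [hsplit, map_mul (f := Φm), ih.2 h1, mul_zero]
    · have hsplit : PB.ι (QD.Path.cons (Sum.inr ym) zp)
          = PB.ι (QD.Path.cons (Sum.inr ym) (QD.Path.nil (Q := Qe Q t pM) u'))
            * PB.ι zp :=
        PB.ι_comp (QD.Path.cons (Sum.inr ym) (QD.Path.nil (Q := Qe Q t pM) u')) zp
      have hval : Φm (PB.ι (QD.Path.cons (Sum.inr ym) (QD.Path.nil (Q := Qe Q t pM) u')))
          = eT.symm (0, coordP K Q n PA basA (pM ym.1)) := by
        obtain ⟨m, hm1, hm2⟩ := ym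
        subst hm1
        subst hm2
        exact hΦy m
      constructor
      · intro h
        rw [hsplit, map_mul (f := Φm), hTmul, hval, eT.apply_symm_apply]
        dsimp only
        rw [zero_mul]
      · intro h
        have h1 : 1 ≤ numY Q t pM zp := by simp [numY] at h; omega
        have hE : eT (Φm (PB.ι (QD.Path.cons (Sum.inr ym)
            (QD.Path.nil (Q := Qe Q t pM) u'))) * Φm (PB.ι zp)) = 0 := by
          rw [hTmul, hval, eT.apply_symm_apply]
          dsimp only
          rw [ih.1 h1]
          simp [aux_dL_zero K Q n PA, aux_dR_zero_right K Q n PA]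
        rw [hsplit, map_mul (f := Φm)]
        exact (LinearEquiv.map_eq_zero_iff eT).mp hE

/-- The canonical basis of the path algebra. -/
def auxB : Module.Basis (QD.PathIn Q) K PA.P :=
  Module.Basis.mk PA.li (by rw [PA.span_top])

theorem auxB_apply {a b : Q.V} (q : Q.Path a b) :
    auxB K Q PA ⟨a, b, q⟩ = PA.ι q :=
  Module.Basis.mk_apply _ _ _

/-- The coefficient of the trivial path `e_i` as a linear functional on the path
algebra. -/
def lamL (i : Q.V) : PA.P →ₗ[K] K :=
  (auxB K Q PA).coord ⟨i, i, QD.Path.nil i⟩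

theorem lamL_iota (i : Q.V) {a b : Q.V} (q : Q.Path a b) :
    lamL K Q PA i (PA.ι q)
      = if (⟨a, b, q⟩ : QD.PathIn Q) = ⟨i, i, QD.Path.nil i⟩ then 1 else 0 := by
  rw [← auxB_apply K Q PA q, lamL]
  show (auxB K Q PA).repr (auxB K Q PA ⟨a, b, q⟩) (⟨i, i, QD.Path.nil i⟩ : QD.PathIn Q) = _
  exact ((auxB K Q PA).repr_self_apply (⟨a, b, q⟩ : QD.PathIn Q)
    (⟨i, i, QD.Path.nil i⟩ : QD.PathIn Q)).trans (if_congr Iff.rfl rfl rfl)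

theorem lamL_mul_iota (i : Q.V) {a b c d : Q.V} (pp : Q.Path a b) (qq : Q.Path c d) :
    lamL K Q PA i (PA.ι pp * PA.ι qq)
      = lamL K Q PA i (PA.ι pp) * lamL K Q PA i (PA.ι qq) := by
  by_cases h : b = c
  · subst h
    rw [← PA.ι_comp, lamL_iota, lamL_iota, lamL_iota]
    have himp1 : (⟨a, d, pp.comp qq⟩ : QD.PathIn Q) = ⟨i, i, QD.Path.nil i⟩ →
        ((⟨a, b, pp⟩ : QD.PathIn Q) = ⟨i, i, QD.Path.nil i⟩ ∧
         (⟨b, d, qq⟩ : QD.PathIn Q) = ⟨i, i, QD.Path.nil i⟩) := by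
      intro h0
      have ha : a = i := congrArg (fun P : QD.PathIn Q => P.1) h0
      have hlen : (pp.comp qq).length = 0 := by
        have := congrArg (fun P : QD.PathIn Q => P.2.2.length) h0
        simpa [QD.Path.length] using this
      rw [aux_length_comp] at hlen
      have hlp : pp.length = 0 := by omega
      have hlq : qq.length = 0 := by omega
      have e1 := aux_len0 Q pp hlp
      have hb : b = a := congrArg (fun P : QD.PathIn Q => P.2.1) e1
      have e2 := aux_len0 Q qq hlq
      constructor
      · exact e1.trans (by rw [ha])
      · exact e2.trans (by rw [hb, ha])
    have himp2 : (⟨a, b, pp⟩ : QD.PathIn Q) = ⟨i, i, QD.Path.nil i⟩ →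
        (⟨b, d, qq⟩ : QD.PathIn Q) = ⟨i, i, QD.Path.nil i⟩ →
        (⟨a, d, pp.comp qq⟩ : QD.PathIn Q) = ⟨i, i, QD.Path.nil i⟩ := by
      intro e1 e2
      have ha : a = i := congrArg (fun P : QD.PathIn Q => P.1) e1
      have hlp : pp.length = 0 := by
        have := congrArg (fun P : QD.PathIn Q => P.2.2.length) e1
        simpa [QD.Path.length] using this
      have hlq : qq.length = 0 := by
        have := congrArg (fun P : QD.PathIn Q => P.2.2.length) e2
        simpa [QD.Path.length] using this
      have hlen : (pp.comp qq).length = 0 := by rw [aux_length_comp]; omega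
      exact (aux_len0 Q (pp.comp qq) hlen).trans (by rw [ha])
    by_cases h0 : (⟨a, d, pp.comp qq⟩ : QD.PathIn Q) = ⟨i, i, QD.Path.nil i⟩
    · obtain ⟨e1, e2⟩ := himp1 h0
      rw [if_pos h0, if_pos e1, if_pos e2]
      norm_num
    · rw [if_neg h0]
      by_cases e1 : (⟨a, b, pp⟩ : QD.PathIn Q) = ⟨i, i, QD.Path.nil i⟩
      · by_cases e2 : (⟨b, d, qq⟩ : QD.PathIn Q) = ⟨i, i, QD.Path.nil i⟩
        · exact absurd (himp2 e1 e2) h0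
        · rw [if_neg e2, mul_zero]
      · rw [if_neg e1, zero_mul]
  · rw [PA.ι_ortho pp qq h, map_zero, lamL_iota, lamL_iota]
    by_cases e1 : (⟨a, b, pp⟩ : QD.PathIn Q) = ⟨i, i, QD.Path.nil i⟩
    · by_cases e2 : (⟨c, d, qq⟩ : QD.PathIn Q) = ⟨i, i, QD.Path.nil i⟩
      · exfalso
        apply h
        have hb : b = i := congrArg (fun P : QD.PathIn Q => P.2.1) e1
        have hc : c = i := congrArg (fun P : QD.PathIn Q => P.1) e2
        rw [hb, hc]
      · rw [if_neg e2, mul_zero]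
    · rw [if_neg e1, zero_mul]

theorem lamL_mul_basis (i : Q.V) (p q : QD.PathIn Q) :
    lamL K Q PA i (auxB K Q PA p * auxB K Q PA q)
      = lamL K Q PA i (auxB K Q PA p) * lamL K Q PA i (auxB K Q PA q) := by
  obtain ⟨a, b, pp⟩ := p
  obtain ⟨c, d, qq⟩ := q
  rw [auxB_apply, auxB_apply]
  exact lamL_mul_iota K Q PA i pp qq

theorem lamL_mul (i : Q.V) (xx yy : PA.P) :
    lamL K Q PA i (xx * yy) = lamL K Q PA i (xx) * lamL K Q PA i (yy) := by
  have step1 : ∀ (p : QD.PathIn Q) (y : PA.P),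
      lamL K Q PA i (auxB K Q PA p * y)
        = lamL K Q PA i (auxB K Q PA p) * lamL K Q PA i y := by
    intro p
    have hmaps : (lamL K Q PA i) ∘ₗ (LinearMap.mulLeft K (auxB K Q PA p))
        = lamL K Q PA i (auxB K Q PA p) • (lamL K Q PA i) := by
      apply (auxB K Q PA).ext
      intro q
      simp only [LinearMap.comp_apply, LinearMap.mulLeft_apply, LinearMap.smul_apply,
        smul_eq_mul]
      exact lamL_mul_basis K Q PA i p q
    intro y
    have := DFunLike.congr_fun hmaps y
    simpa using this
  have hmaps2 : (lamL K Q PA i) ∘ₗ (LinearMap.mulRight K yy)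
      = lamL K Q PA i yy • (lamL K Q PA i) := by
    apply (auxB K Q PA).ext
    intro p
    simp only [LinearMap.comp_apply, LinearMap.mulRight_apply, LinearMap.smul_apply,
      smul_eq_mul]
    rw [step1 p yy]
    ring
  have := DFunLike.congr_fun hmaps2 xx
  simp only [LinearMap.comp_apply, LinearMap.mulRight_apply, LinearMap.smul_apply,
    smul_eq_mul] at this
  rw [this]
  ring

theorem lamL_one (i : Q.V) : lamL K Q PA i 1 = 1 := by
  rw [← PA.sum_nil, map_sum]
  have hterm : ∀ j : Q.V, lamL K Q PA i (PA.ι (QD.Path.nil j))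
      = if j = i then 1 else 0 := by
    intro j
    rw [lamL_iota]
    by_cases hj : j = i
    · subst hj; rw [if_pos rfl, if_pos rfl]
    · rw [if_neg hj, if_neg (fun h : (⟨j, j, QD.Path.nil j⟩ : QD.PathIn Q) = ⟨i, i, QD.Path.nil i⟩ => hj (congrArg (fun P : QD.PathIn Q => P.1) h))]
  rw [Finset.sum_congr rfl (fun j _ => hterm j)]
  simp

/-- The character of `A` attached to the vertex `i`. -/
def lamA (hn : 2 ≤ n) (i : Q.V) : TA K Q n PA →ₐ[K] K :=
  RingQuot.liftAlgHom K
    ⟨AlgHom.ofLinearMap (lamL K Q PA i) (lamL_one K Q PA i) (lamL_mul K Q PA i), by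
      rintro xx yy ⟨rfl, ⟨P, hPlen, rfl⟩⟩
      obtain ⟨u, v, qq⟩ := P
      have hPlen' : n ≤ qq.length := hPlen
      simp only [map_zero]
      have : lamL K Q PA i (PA.ι qq) = 0 := by
        rw [lamL_iota, if_neg]
        intro h
        have := congrArg (fun P : QD.PathIn Q => P.2.2.length) h
        simp only [QD.Path.length] at this
        omega
      exact this⟩

theorem lamA_cls (hn : 2 ≤ n) (i : Q.V) {a b : Q.V} (q : Q.Path a b) :
    lamA K Q n PA hn i (cls K Q n PA q) = lamL K Q PA i (PA.ι q) := by
  unfold cls lamA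
  exact RingQuot.liftAlgHom_mkAlgHom_apply _ _ _ _

theorem aux_nil_short (hn : 2 ≤ n) (i : Q.V) :
    ((⟨i, i, QD.Path.nil i⟩ : QD.PathIn Q)).2.2.length < n := by
  simp only [QD.Path.length]
  omega

theorem aux_coord_eq_lam (hn : 2 ≤ n)
    (hbas : ∀ sp : Short Q n, basA sp = cls K Q n PA sp.1.2.2) (i : Q.V)
    (z : TA K Q n PA) :
    basA.repr z ⟨⟨i, i, QD.Path.nil i⟩, aux_nil_short Q n hn i⟩ = lamA K Q n PA hn i z := by
  have hmaps : (basA.coord ⟨⟨i, i, QD.Path.nil i⟩, aux_nil_short Q n hn i⟩)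
      = (lamA K Q n PA hn i).toLinearMap := by
    apply basA.ext
    intro sp
    obtain ⟨⟨u, v, qq⟩, hq⟩ := sp
    rw [Module.Basis.coord_apply, Module.Basis.repr_self_apply, hbas ⟨⟨u, v, qq⟩, hq⟩]
    have : (lamA K Q n PA hn i).toLinearMap (cls K Q n PA qq)
        = lamL K Q PA i (PA.ι qq) := lamA_cls K Q n PA hn i qq
    rw [this, lamL_iota]
    by_cases h : (⟨u, v, qq⟩ : QD.PathIn Q) = ⟨i, i, QD.Path.nil i⟩
    · rw [if_pos h, if_pos (Subtype.ext h)]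
    · rw [if_neg h, if_neg (fun hh => h (congrArg Subtype.val hh))]
  have := DFunLike.congr_fun hmaps z
  simpa using this

theorem aux_jrad_coord (hn : 2 ≤ n)
    (hbas : ∀ sp : Short Q n, basA sp = cls K Q n PA sp.1.2.2) (i : Q.V)
    (z : TA K Q n PA) (hz : z ∈ JradA K Q n PA) :
    basA.repr z ⟨⟨i, i, QD.Path.nil i⟩, aux_nil_short Q n hn i⟩ = 0 := by
  rw [aux_coord_eq_lam K Q n PA basA hn hbas i z]
  have hsurj : Function.Surjective (lamA K Q n PA hn i) := by
    intro c
    refine ⟨algebraMap K _ c, ?_⟩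
    simp [AlgHom.commutes]
  have hmax : (RingHom.ker (lamA K Q n PA hn i)).IsMaximal :=
    RingHom.ker_isMaximal_of_surjective _ hsurj
  have hle : JradA K Q n PA ≤ RingHom.ker (lamA K Q n PA hn i) := by
    unfold JradA Ideal.jacobson
    exact sInf_le ⟨bot_le, hmax⟩
  exact hle hz

theorem aux_grow (hn : 2 ≤ n)
    (hbas : ∀ sp : Short Q n, basA sp = cls K Q n PA sp.1.2.2)
    (hMlt : ∀ m : Fin t, (pM m).2.2.length < n)
    (hMsp : Submodule.span K (Set.range fun m : Fin t => cls K Q n PA (pM m).2.2)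
      = socA K Q n PA) :
    ∀ (N : ℕ) {i j : Q.V} (p : Q.Path i j), n - p.length ≤ N → cls K Q n PA p ≠ 0 →
    ∃ (m : Fin t) (γ₁ : Q.Path (pM m).1 i) (γ₂ : Q.Path j (pM m).2.1),
      γ₁.comp (p.comp γ₂) = (pM m).2.2 := by
  intro N
  induction N with
  | zero =>
    intro i j p hm hne
    exfalso
    have := aux_cls_lt K Q n PA p hne
    omega
  | succ N ih =>
    intro i j p hm hne
    have hplen : p.length < n := aux_cls_lt K Q n PA p hne
    by_cases hsoc : cls K Q n PA p ∈ socA K Q n PA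
    · -- base case : `p` is one of the `p_m`.
      have hex : ∃ m : Fin t, (⟨i, j, p⟩ : QD.PathIn Q) = pM m := by
        by_contra hno
        have hker : Submodule.span K (Set.range fun m : Fin t => cls K Q n PA (pM m).2.2)
            ≤ LinearMap.ker (basA.coord ⟨⟨i, j, p⟩, hplen⟩) := by
          rw [Submodule.span_le]
          rintro _ ⟨m, rfl⟩
          have hb : basA ⟨pM m, hMlt m⟩ = cls K Q n PA (pM m).2.2 := hbas ⟨pM m, hMlt m⟩
          have hmem : basA.coord ⟨⟨i, j, p⟩, hplen⟩ (basA ⟨pM m, hMlt m⟩) = 0 := by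
            rw [Module.Basis.coord_apply, Module.Basis.repr_self_apply, if_neg]
            intro hh
            have hval : pM m = (⟨i, j, p⟩ : QD.PathIn Q) := congrArg Subtype.val hh
            exact hno ⟨m, hval.symm⟩
          rw [SetLike.mem_coe, LinearMap.mem_ker]
          show basA.coord ⟨⟨i, j, p⟩, hplen⟩ (cls K Q n PA (pM m).2.2) = 0
          rw [← hb]
          exact hmem
        rw [hMsp] at hker
        have := hker hsoc
        have hb2 : basA ⟨⟨i, j, p⟩, hplen⟩ = cls K Q n PA p := hbas ⟨⟨i, j, p⟩, hplen⟩
        rw [LinearMap.mem_ker, ← hb2, Module.Basis.coord_apply,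
          Module.Basis.repr_self_apply, if_pos rfl] at this
        exact one_ne_zero this
      obtain ⟨m, hmq⟩ := hex
      refine ⟨m, ?_⟩
      rw [← hmq]
      refine ⟨QD.Path.nil i, QD.Path.nil j, ?_⟩
      rw [aux_comp_nil]
      rfl
    · -- inductive case : extend `p` by a positive-length path.
      have hnot : ¬ ∀ r ∈ JradA K Q n PA, r * cls K Q n PA p = 0 ∧
          cls K Q n PA p * r = 0 := hsoc
      push_neg at hnot
      obtain ⟨r, hrJ, hrne⟩ := hnot
      have hcases : r * cls K Q n PA p ≠ 0 ∨ cls K Q n PA p * r ≠ 0 := by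
        by_cases hLz : r * cls K Q n PA p = 0
        · exact Or.inr (hrne hLz)
        · exact Or.inl hLz
      have hr1 := Module.Basis.linearCombination_repr basA r
      rw [Finsupp.linearCombination_apply] at hr1
      have hposlen : ∀ sp : Short Q n, basA.repr r sp ≠ 0 → 0 < sp.1.2.2.length := by
        rintro ⟨⟨u, v, qq⟩, hq⟩ hspne
        by_contra h0
        have h0' : ¬ 0 < qq.length := h0
        have hq0 : qq.length = 0 := by omega
        have e := aux_len0 Q qq hq0
        have : (⟨⟨u, v, qq⟩, hq⟩ : Short Q n)
            = ⟨⟨u, u, QD.Path.nil u⟩, aux_nil_short Q n hn u⟩ := Subtype.ext e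
        rw [this] at hspne
        exact hspne (aux_jrad_coord K Q n PA basA hn hbas u r hrJ)
      rcases hcases with hL | hR
      · -- left multiplication case
        have hex : ∃ sp : Short Q n, basA.repr r sp ≠ 0 ∧
            basA sp * cls K Q n PA p ≠ 0 := by
          by_contra hco
          push_neg at hco
          apply hL
          rw [← hr1, Finsupp.sum_mul, Finsupp.sum]
          apply Finset.sum_eq_zero
          intro sp hsp
          rw [smul_mul_assoc, hco sp (Finsupp.mem_support_iff.mp hsp), smul_zero]
        obtain ⟨sp, hspne, hprod⟩ := hex
        have hpos := hposlen sp hspne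
        obtain ⟨⟨u, v, qq⟩, hq⟩ := sp
        have hb3 : basA ⟨⟨u, v, qq⟩, hq⟩ = cls K Q n PA qq := hbas ⟨⟨u, v, qq⟩, hq⟩
        rw [hb3] at hprod
        have hv : v = i := by
          by_contra hv
          exact hprod (aux_cls_ortho K Q n PA qq p hv)
        subst hv
        rw [← aux_cls_comp] at hprod
        have hlen2 : n - (qq.comp p).length ≤ N := by
          have hlc := aux_length_comp Q qq p
          have hpos' : 0 < qq.length := hpos
          rw [hlc]
          omega
        obtain ⟨m, γ₁, γ₂, hcomp⟩ := ih (qq.comp p) hlen2 hprod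
        rw [aux_comp_assoc] at hcomp
        refine ⟨m, γ₁.comp qq, γ₂, ?_⟩
        rw [aux_comp_assoc]
        exact hcomp
      · -- right multiplication case
        have hex : ∃ sp : Short Q n, basA.repr r sp ≠ 0 ∧
            cls K Q n PA p * basA sp ≠ 0 := by
          by_contra hco
          push_neg at hco
          apply hR
          rw [← hr1, Finsupp.mul_sum, Finsupp.sum]
          apply Finset.sum_eq_zero
          intro sp hsp
          rw [mul_smul_comm, hco sp (Finsupp.mem_support_iff.mp hsp), smul_zero]
        obtain ⟨sp, hspne, hprod⟩ := hex
        have hpos := hposlen sp hspne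
        obtain ⟨⟨u, v, qq⟩, hq⟩ := sp
        have hb3 : basA ⟨⟨u, v, qq⟩, hq⟩ = cls K Q n PA qq := hbas ⟨⟨u, v, qq⟩, hq⟩
        rw [hb3] at hprod
        have hu : j = u := by
          by_contra hu
          exact hprod (aux_cls_ortho K Q n PA p qq hu)
        subst hu
        rw [← aux_cls_comp] at hprod
        have hlen2 : n - (p.comp qq).length ≤ N := by
          have hlc := aux_length_comp Q p qq
          have hpos' : 0 < qq.length := hpos
          rw [hlc]
          omega
        obtain ⟨m, γ₁, γ₂, hcomp⟩ := ih (p.comp qq) hlen2 hprod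
        rw [aux_comp_assoc] at hcomp
        refine ⟨m, γ₁, qq.comp γ₂, ?_⟩
        exact hcomp

/-- every path of the extended quiver which is nonzero in `T_α(A)` is
contained in an oriented cycle which is nonzero in `T_α(A)`. -/
theorem stmt14
    [IsAlgClosed K]
    (hn : 2 ≤ n)
    (hdim : 1 < Module.finrank K (TA K Q n PA))
    (hconn : ∀ i j : Q.V,
      Relation.EqvGen (fun u v : Q.V => Nonempty (Q.Ar u v) ∨ Nonempty (Q.Ar v u)) i j)
    (hcyc : ∀ (i : Q.V) (p : Q.Path i i), 0 < p.length → cls K Q n PA p = 0)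
    (hbas : ∀ sp : Short Q n, basA sp = cls K Q n PA sp.1.2.2)
    (hs1 : n + 1 ≤ s) (hs2 : s ≤ 2 * n - 2)
    (hk : k ≠ 0)
    (hα : ∀ {i j l : Q.V} (a : Q.Path i j) (b : Q.Path j l),
      αm (cls K Q n PA a) (cls K Q n PA b) =
        k • ∑ r : ZMod s, aTerm K Q n PA basA s w x a b r)
    (hcoc : ∀ a b c : TA K Q n PA,
      dL K Q n PA a (αm b c) + αm a (b * c) = αm (a * b) c + dR K Q n PA (αm a b) c)
    (hMlt : ∀ m : Fin t, (pM m).2.2.length < n)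
    (hMli : LinearIndependent K fun m : Fin t => cls K Q n PA (pM m).2.2)
    (hMsp : Submodule.span K (Set.range fun m : Fin t => cls K Q n PA (pM m).2.2)
      = socA K Q n PA)
    (hTmul : ∀ u v : T, eT (u * v) = ((eT u).1 * (eT v).1,
      dL K Q n PA (eT u).1 (eT v).2 + dR K Q n PA (eT u).2 (eT v).1 + αm (eT u).1 (eT v).1))
    (hTone : eT 1 = (1, 0))
    (hΦnil : ∀ i : Q.V, Φm (PB.ι (QD.Path.nil (Q := Qe Q t pM) i))
      = eT.symm (cls K Q n PA (QD.Path.nil i), 0))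
    (hΦarr : ∀ {i j : Q.V} (a : Q.Ar i j),
      Φm (PB.ι (QD.Path.cons (Sum.inl a) (QD.Path.nil (Q := Qe Q t pM) j)))
      = eT.symm (cls K Q n PA (QD.Path.cons a (QD.Path.nil j)), 0))
    (hΦy : ∀ m : Fin t,
      Φm (PB.ι (QD.Path.cons (yArr Q t pM m) (QD.Path.nil (Q := Qe Q t pM) (pM m).1)))
      = eT.symm (0, coordP K Q n PA basA (pM m)))
    (hΦsurj : Function.Surjective Φm)
    {a b : Q.V} (z : (Qe Q t pM).Path a b) (hz : Φm (PB.ι z) ≠ 0) :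
    ∃ (h : Q.V) (C : (Qe Q t pM).Path h h) (γ₁ : (Qe Q t pM).Path h a)
      (γ₂ : (Qe Q t pM).Path b h),
      0 < C.length ∧ Φm (PB.ι C) ≠ 0 ∧ C = γ₁.comp (z.comp γ₂) := by
  by_cases hY2 : 2 ≤ numY Q t pM z
  · exact absurd ((aux_phiY K Q n PA basA αm t pM T eT PB Φm hTmul hΦy z).2 hY2) hz
  by_cases hY1 : numY Q t pM z = 1
  · -- Case : exactly one `y`-arrow.
    obtain ⟨m, δ₂, δ₁, hd⟩ := aux_decompY Q t pM z hY1
    have hsplit1 : PB.ι (QD.Path.cons (yArr Q t pM m) (embed Q t pM δ₁))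
        = PB.ι (QD.Path.cons (yArr Q t pM m) (QD.Path.nil (Q := Qe Q t pM) (pM m).1))
          * PB.ι (embed Q t pM δ₁) :=
      PB.ι_comp (QD.Path.cons (yArr Q t pM m) (QD.Path.nil (Q := Qe Q t pM) (pM m).1))
        (embed Q t pM δ₁)
    have hE2 : eT (Φm (PB.ι (QD.Path.cons (yArr Q t pM m) (embed Q t pM δ₁))))
        = (0, dR K Q n PA (coordP K Q n PA basA (pM m)) (cls K Q n PA δ₁)) := by
      rw [hsplit1, map_mul (f := Φm), hTmul, hΦy m, eT.apply_symm_apply,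
        aux_fst K Q n PA αm t pM T eT PB Φm hTmul hΦnil hΦarr δ₁]
      dsimp only
      simp [aux_dL_zero K Q n PA]
    have hsplit2 : PB.ι z = PB.ι (embed Q t pM δ₂)
        * PB.ι (QD.Path.cons (yArr Q t pM m) (embed Q t pM δ₁)) := by
      rw [hd]
      exact PB.ι_comp (embed Q t pM δ₂)
        (QD.Path.cons (yArr Q t pM m) (embed Q t pM δ₁))
    have hEz : eT (Φm (PB.ι z)) = (0, dL K Q n PA (cls K Q n PA δ₂)
        (dR K Q n PA (coordP K Q n PA basA (pM m)) (cls K Q n PA δ₁))) := by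
      rw [hsplit2, map_mul (f := Φm), hTmul, hE2,
        aux_fst K Q n PA αm t pM T eT PB Φm hTmul hΦnil hΦarr δ₂]
      dsimp only
      simp [aux_dR_zero_right K Q n PA]
    have hΦz : eT (Φm (PB.ι z)) ≠ 0 := fun h => hz ((LinearEquiv.map_eq_zero_iff eT).mp h)
    have hgne : dL K Q n PA (cls K Q n PA δ₂)
        (dR K Q n PA (coordP K Q n PA basA (pM m)) (cls K Q n PA δ₁)) ≠ 0 := by
      intro hg
      apply hΦz
      rw [hEz, hg]
      rfl
    have hex : ∃ sp : Short Q n, dL K Q n PA (cls K Q n PA δ₂)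
        (dR K Q n PA (coordP K Q n PA basA (pM m)) (cls K Q n PA δ₁)) (basA sp) ≠ 0 := by
      by_contra hco
      push_neg at hco
      apply hgne
      apply basA.ext
      intro sp
      simp [hco sp]
    obtain ⟨sp, hspne⟩ := hex
    obtain ⟨⟨q1, q2, qpath⟩, hql⟩ := sp
    have hbq : basA ⟨⟨q1, q2, qpath⟩, hql⟩ = cls K Q n PA qpath := hbas _
    rw [hbq] at hspne
    have hval : ∀ zz : TA K Q n PA, dL K Q n PA (cls K Q n PA δ₂)
        (dR K Q n PA (coordP K Q n PA basA (pM m)) (cls K Q n PA δ₁)) zz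
        = coordP K Q n PA basA (pM m)
            (cls K Q n PA δ₁ * (zz * cls K Q n PA δ₂)) := by
      intro zz
      rw [aux_dL_apply, aux_dR_apply]
    rw [hval (cls K Q n PA qpath)] at hspne
    have hq2 : a = q2 := by
      by_contra hq2c
      apply hspne
      rw [aux_cls_ortho K Q n PA qpath δ₂ (fun h => hq2c h.symm), mul_zero, map_zero]
    subst hq2
    have hq1 : b = q1 := by
      by_contra hq1c
      apply hspne
      rw [← aux_cls_comp, aux_cls_ortho K Q n PA δ₁ (qpath.comp δ₂) hq1c, map_zero]
    subst hq1
    -- the cycle `z ⬝ qpath`.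
    refine ⟨a, z.comp (embed Q t pM qpath), QD.Path.nil (Q := Qe Q t pM) a, embed Q t pM qpath, ?_, ?_, rfl⟩
    · rw [aux_length_comp]
      have hlz : 0 < z.length := by
        rw [hd, aux_length_comp]
        simp [QD.Path.length]
      omega
    · have hsplitC : PB.ι (z.comp (embed Q t pM qpath))
          = PB.ι z * PB.ι (embed Q t pM qpath) := PB.ι_comp z (embed Q t pM qpath)
      have hEC : eT (Φm (PB.ι (z.comp (embed Q t pM qpath))))
          = (0, dR K Q n PA (dL K Q n PA (cls K Q n PA δ₂)
              (dR K Q n PA (coordP K Q n PA basA (pM m)) (cls K Q n PA δ₁)))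
              (cls K Q n PA qpath)) := by
        rw [hsplitC, map_mul (f := Φm), hTmul, hEz,
          aux_fst K Q n PA αm t pM T eT PB Φm hTmul hΦnil hΦarr qpath]
        dsimp only
        simp [aux_dL_zero K Q n PA]
      intro hC0
      rw [hC0, map_zero] at hEC
      have hdr := congrArg Prod.snd hEC
      simp only [Prod.snd_zero] at hdr
      have hfin := congrArg
        (fun f : Module.Dual K (TA K Q n PA) => f (cls K Q n PA (QD.Path.nil a))) hdr.symm
      simp only [aux_dR_apply, LinearMap.zero_apply] at hfin
      rw [← aux_cls_comp, aux_comp_nil, hval (cls K Q n PA qpath)] at hfin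
      exact hspne hfin
  · -- Case : no `y`-arrow.
    have hY0 : numY Q t pM z = 0 := by omega
    obtain ⟨p, hp⟩ := aux_decompE Q t pM z hY0
    subst hp
    by_cases hclsp : cls K Q n PA p = 0
    · -- `cls p = 0`, so the second component is nonzero.
      have hple : 0 < p.length := by
        by_contra hc
        have h0len : p.length = 0 := by omega
        have e := aux_len0 Q p h0len
        have hba : b = a := congrArg (fun P : QD.PathIn Q => P.2.1) e
        subst hba
        have hpnil : p = QD.Path.nil b := aux_sig_inj Q e
        rw [hpnil] at hclsp
        have hb0 : basA ⟨⟨b, b, QD.Path.nil b⟩, aux_nil_short Q n hn b⟩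
            = cls K Q n PA (QD.Path.nil b) := hbas _
        exact basA.ne_zero _ (hb0.trans hclsp)
      have hF : (eT (Φm (PB.ι (embed Q t pM p)))).2 ≠ 0 := by
        intro hF0
        apply hz
        apply (LinearEquiv.map_eq_zero_iff eT).mp
        apply Prod.ext_iff.mpr
        constructor
        · rw [aux_fst K Q n PA αm t pM T eT PB Φm hTmul hΦnil hΦarr p]
          exact hclsp
        · exact hF0
      have hexz : ∃ sp : Short Q n,
          (eT (Φm (PB.ι (embed Q t pM p)))).2 (basA sp) ≠ 0 := by
        by_contra hco
        push_neg at hco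
        apply hF
        apply basA.ext
        intro sp
        simp [hco sp]
      obtain ⟨sp, hspne⟩ := hexz
      obtain ⟨⟨q1, q2, qpath⟩, hql⟩ := sp
      have hbq : basA ⟨⟨q1, q2, qpath⟩, hql⟩ = cls K Q n PA qpath := hbas _
      rw [hbq] at hspne
      have hinv := aux_F_inv K Q n PA basA s w x k αm t pM T eT PB Φm hbas hα hTmul hΦnil
        hΦarr p (cls K Q n PA qpath)
      have hq1 : b = q1 := by
        by_contra hq1c
        apply hspne
        rw [← hinv, aux_cls_ortho K Q n PA (QD.Path.nil b) qpath hq1c,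
          zero_mul, map_zero]
      subst hq1
      have hq2 : a = q2 := by
        by_contra hq2c
        apply hspne
        rw [← hinv, mul_assoc, aux_cls_ortho K Q n PA qpath (QD.Path.nil a)
          (fun h => hq2c h.symm), mul_zero, map_zero]
      subst hq2
      refine ⟨a, (embed Q t pM p).comp (embed Q t pM qpath), QD.Path.nil (Q := Qe Q t pM) a,
        embed Q t pM qpath, ?_, ?_, rfl⟩
      · rw [aux_length_comp, aux_length_embed]
        omega
      · have hsplitC : PB.ι ((embed Q t pM p).comp (embed Q t pM qpath))
            = PB.ι (embed Q t pM p) * PB.ι (embed Q t pM qpath) :=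
          PB.ι_comp (embed Q t pM p) (embed Q t pM qpath)
        have hEC : eT (Φm (PB.ι ((embed Q t pM p).comp (embed Q t pM qpath))))
            = (0, dR K Q n PA ((eT (Φm (PB.ι (embed Q t pM p)))).2)
                (cls K Q n PA qpath)) := by
          rw [hsplitC, map_mul (f := Φm), hTmul,
            aux_fst K Q n PA αm t pM T eT PB Φm hTmul hΦnil hΦarr qpath]
          conv_lhs => rw [aux_fst K Q n PA αm t pM T eT PB Φm hTmul hΦnil hΦarr p, hclsp]
          simp [aux_dL_zero K Q n PA]
        intro hC0
        rw [hC0, map_zero] at hEC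
        have hdr := congrArg Prod.snd hEC
        simp only [Prod.snd_zero] at hdr
        have hfin := congrArg
          (fun f : Module.Dual K (TA K Q n PA) => f (cls K Q n PA (QD.Path.nil a))) hdr.symm
        simp only [aux_dR_apply, LinearMap.zero_apply] at hfin
        rw [← aux_cls_comp, aux_comp_nil] at hfin
        exact hspne hfin
    · -- `cls p ≠ 0` : grow `p` to one of the socle paths `p_m`.
      obtain ⟨m, γ₁, γ₂, hcomp⟩ := aux_grow K Q n PA basA t pM hn hbas hMlt hMsp n p
        (by omega) hclsp
      refine ⟨(pM m).1,
        (embed Q t pM γ₁).comp ((embed Q t pM p).comp ((embed Q t pM γ₂).comp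
          (QD.Path.cons (yArr Q t pM m) (QD.Path.nil (Q := Qe Q t pM) (pM m).1)))),
        embed Q t pM γ₁,
        (embed Q t pM γ₂).comp
          (QD.Path.cons (yArr Q t pM m) (QD.Path.nil (Q := Qe Q t pM) (pM m).1)),
        ?_, ?_, rfl⟩
      · simp [aux_length_comp, QD.Path.length]
      · have hCW : (embed Q t pM γ₁).comp ((embed Q t pM p).comp ((embed Q t pM γ₂).comp
            (QD.Path.cons (yArr Q t pM m) (QD.Path.nil (Q := Qe Q t pM) (pM m).1))))
            = (embed Q t pM (γ₁.comp (p.comp γ₂))).comp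
              (QD.Path.cons (yArr Q t pM m) (QD.Path.nil (Q := Qe Q t pM) (pM m).1)) := by
          rw [aux_embed_comp, aux_embed_comp, aux_comp_assoc, aux_comp_assoc]
        rw [hCW]
        have hsplitC : PB.ι ((embed Q t pM (γ₁.comp (p.comp γ₂))).comp
              (QD.Path.cons (yArr Q t pM m) (QD.Path.nil (Q := Qe Q t pM) (pM m).1)))
            = PB.ι (embed Q t pM (γ₁.comp (p.comp γ₂)))
              * PB.ι (QD.Path.cons (yArr Q t pM m)
                  (QD.Path.nil (Q := Qe Q t pM) (pM m).1)) :=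
          PB.ι_comp (embed Q t pM (γ₁.comp (p.comp γ₂)))
            (QD.Path.cons (yArr Q t pM m) (QD.Path.nil (Q := Qe Q t pM) (pM m).1))
        have hclsW : cls K Q n PA (γ₁.comp (p.comp γ₂)) = cls K Q n PA (pM m).2.2 := by
          rw [hcomp]
        have hEC : eT (Φm (PB.ι ((embed Q t pM (γ₁.comp (p.comp γ₂))).comp
              (QD.Path.cons (yArr Q t pM m) (QD.Path.nil (Q := Qe Q t pM) (pM m).1)))))
            = (0, dL K Q n PA (cls K Q n PA (pM m).2.2)
                (coordP K Q n PA basA (pM m))) := by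
          rw [hsplitC, map_mul (f := Φm), hTmul, hΦy m, eT.apply_symm_apply,
            aux_fst K Q n PA αm t pM T eT PB Φm hTmul hΦnil hΦarr (γ₁.comp (p.comp γ₂)),
            hclsW]
          dsimp only
          simp [aux_dR_zero_right K Q n PA]
        intro hC0
        rw [hC0, map_zero] at hEC
        have hdl := congrArg Prod.snd hEC
        simp only [Prod.snd_zero] at hdl
        have hfin := congrArg
          (fun f : Module.Dual K (TA K Q n PA) =>
            f (cls K Q n PA (QD.Path.nil (pM m).1))) hdl.symm
        simp only [aux_dL_apply, LinearMap.zero_apply] at hfin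
        rw [← aux_cls_comp] at hfin
        have hred : (QD.Path.nil (pM m).1).comp (pM m).2.2 = (pM m).2.2 := rfl
        rw [hred] at hfin
        have hbpm : basA ⟨pM m, hMlt m⟩ = cls K Q n PA (pM m).2.2 := hbas _
        rw [← hbpm, aux_coordP_basA K Q n PA basA (pM m) (hMlt m), if_pos rfl] at hfin
        exact one_ne_zero hfin

end Statements
end
end

section
/- Suppose n ≥ 3 and let h be a vertex of Δ that is neither a sink nor a source in Δ. Then card(𝒞_h/≡) = 1. -/
noncomputable section
open Classical

section AuxPath

namespace QD.Path

variable {Q : QD}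

theorem comp_assoc : ∀ {i j k l : Q.V} (p : Path Q i j) (q : Path Q j k) (r : Path Q k l),
    (p.comp q).comp r = p.comp (q.comp r)
  | _, _, _, _, nil _, _, _ => rfl
  | _, _, _, _, cons a p, q, r => congrArg (cons a) (comp_assoc p q r)

theorem length_comp : ∀ {i j k : Q.V} (p : Path Q i j) (q : Path Q j k),
    (p.comp q).length = p.length + q.length
  | _, _, _, nil _, q => (Nat.zero_add _).symm
  | _, _, _, cons a p, q => by
      show (p.comp q).length + 1 = (p.length + 1) + q.length
      rw [length_comp p q]; omega

theorem exists_last : ∀ {i j : Q.V} (p : Path Q i j), 0 < p.length →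
    ∃ (u : Q.V) (a : Q.Ar u j) (p' : Path Q i u), p = p'.comp (cons a (nil j))
  | _, _, nil _, hl => absurd hl (by simp [length])
  | _, _, cons a (nil _), _ => ⟨_, a, nil _, rfl⟩
  | _, j, cons a (cons b p), _ => by
      obtain ⟨u, c, p', hp⟩ := exists_last (cons b p) (by simp [length])
      exact ⟨u, c, cons a p', by rw [hp]; rfl⟩

theorem arrowMem_comp_left {x y : Q.V} (a : Q.Ar x y) :
    ∀ {i j k : Q.V} (p : Path Q i j) (q : Path Q j k), arrowMem a p → arrowMem a (p.comp q)
  | _, _, _, nil _, _, hm => absurd hm (by simp [arrowMem])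
  | _, _, _, cons _ p, q, hm => by
      cases hm with
      | inl hh => exact Or.inl hh
      | inr hh => exact Or.inr (arrowMem_comp_left a p q hh)

theorem arrowMem_comp_right {x y : Q.V} (a : Q.Ar x y) :
    ∀ {i j k : Q.V} (p : Path Q i j) (q : Path Q j k), arrowMem a q → arrowMem a (p.comp q)
  | _, _, _, nil _, _, hm => hm
  | _, _, _, cons _ p, q, hm => Or.inr (arrowMem_comp_right a p q hm)

theorem eq_of_length_zero : ∀ {i j : Q.V} (p : Path Q i j), p.length = 0 → i = j
  | _, _, nil _, _ => rfl
  | _, _, cons _ _, hh => by simp [length] at hh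

end QD.Path

theorem embed_comp (Q : QD) [Fintype Q.V] (t : ℕ) (pM : Fin t → QD.PathIn Q) :
    ∀ {i j k : Q.V} (p : Q.Path i j) (q : Q.Path j k),
      embed Q t pM (p.comp q) = (embed Q t pM p).comp (embed Q t pM q)
  | _, _, _, QD.Path.nil _, _ => rfl
  | _, _, _, QD.Path.cons a p, q => by
      show QD.Path.cons (Sum.inl a) (embed Q t pM (p.comp q)) =
        QD.Path.cons (Sum.inl a) ((embed Q t pM p).comp (embed Q t pM q))
      rw [embed_comp Q t pM p q]

theorem numY_cons_inl (Q : QD) [Fintype Q.V] (t : ℕ) (pM : Fin t → QD.PathIn Q)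
    {i j k : Q.V} (a : Q.Ar i j) (p : (Qe Q t pM).Path j k) :
    numY Q t pM (QD.Path.cons (Sum.inl a) p) = numY Q t pM p := Nat.zero_add _

theorem numY_cons_inr (Q : QD) [Fintype Q.V] (t : ℕ) (pM : Fin t → QD.PathIn Q)
    {i j k : Q.V} (y : {m : Fin t // (pM m).2.1 = i ∧ (pM m).1 = j})
    (p : (Qe Q t pM).Path j k) :
    numY Q t pM (QD.Path.cons (Sum.inr y) p) = 1 + numY Q t pM p := rfl

theorem numY_comp (Q : QD) [Fintype Q.V] (t : ℕ) (pM : Fin t → QD.PathIn Q) :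
    ∀ {i j k : (Qe Q t pM).V} (p : (Qe Q t pM).Path i j) (q : (Qe Q t pM).Path j k),
      numY Q t pM (p.comp q) = numY Q t pM p + numY Q t pM q
  | _, _, _, QD.Path.nil _, q => (Nat.zero_add _).symm
  | _, _, _, QD.Path.cons a p, q => by
      rcases a with a' | y
      · show numY Q t pM (QD.Path.cons (Sum.inl a') (p.comp q)) = _
        rw [numY_cons_inl, numY_cons_inl, numY_comp Q t pM p q]
      · show numY Q t pM (QD.Path.cons (Sum.inr y) (p.comp q)) = _
        rw [numY_cons_inr, numY_cons_inr, numY_comp Q t pM p q]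
        omega

/-- Left quasi-regularity of Jacobson-radical elements, noncommutative version. -/
theorem aux_qreg {R : Type} [Ring R] {r : R} (hr : r ∈ Ideal.jacobson (⊥ : Ideal R)) (y : R) :
    ∃ z, z * (y * r + 1) = 1 := by
  by_contra hc
  push_neg at hc
  have h1 : Ideal.span {y * r + 1} ≠ ⊤ := by
    intro htop
    have h1m : (1 : R) ∈ Ideal.span {y * r + 1} := by rw [htop]; trivial
    obtain ⟨z, hz⟩ := Submodule.mem_span_singleton.mp h1m
    exact hc z (by rw [← smul_eq_mul]; exact hz)
  obtain ⟨M, hM, hle⟩ := Ideal.exists_le_maximal _ h1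
  have hrM : r ∈ M := Ideal.mem_sInf.mp hr ⟨bot_le, hM⟩
  have h3 : y * r + 1 ∈ M := hle (Ideal.subset_span rfl)
  have h4 : (1 : R) ∈ M := by
    have h5 := M.sub_mem h3 (Ideal.mul_mem_left M y hrM)
    simpa using h5
  exact hM.ne_top ((Ideal.eq_top_iff_one M).mpr h4)

/-- An element `x` with `x R x = 0` lies in the Jacobson radical. -/
theorem aux_niljac {R : Type} [Ring R] {x : R} (hx : ∀ y : R, x * y * x = 0) :
    x ∈ Ideal.jacobson (⊥ : Ideal R) := by
  have hmem : x ∈ sInf {J : Ideal R | ⊥ ≤ J ∧ J.IsMaximal} := by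
    rw [Ideal.mem_sInf]
    rintro M ⟨-, hM⟩
    by_contra hxM
    have hxmem : x ∈ M ⊔ Ideal.span {x} :=
      (le_sup_right : Ideal.span {x} ≤ _) (Ideal.subset_span rfl)
    have hlt : M < M ⊔ Ideal.span {x} :=
      lt_of_le_of_ne le_sup_left (by intro he; rw [← he] at hxmem; exact hxM hxmem)
    have htop : M ⊔ Ideal.span {x} = ⊤ := (Ideal.isMaximal_def.mp hM).2 _ hlt
    have h1 : (1 : R) ∈ M ⊔ Ideal.span {x} := by rw [htop]; trivial
    obtain ⟨m, hm, sx, hsx, hms⟩ := Submodule.mem_sup.mp h1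
    obtain ⟨z, hz⟩ := Submodule.mem_span_singleton.mp hsx
    rw [smul_eq_mul] at hz
    have hw2 : (z * x) * (z * x) = 0 := by
      rw [mul_assoc z x (z * x), ← mul_assoc x z x, hx z, mul_zero]
    have hone : (1 + z * x) * m = 1 := by
      have hm1 : m = 1 - z * x := eq_sub_of_add_eq (by rw [hz]; exact hms)
      rw [hm1]
      have hexp : (1 + z * x) * (1 - z * x) = 1 - (z * x) * (z * x) := by noncomm_ring
      rw [hexp, hw2, sub_zero]
    have h1M : (1 : R) ∈ M := by
      have := Ideal.mul_mem_left M (1 + z * x) hm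
      rwa [hone] at this
    exact hM.ne_top ((Ideal.eq_top_iff_one M).mpr h1M)
  exact hmem

end AuxPath

section Statements

variable (K : Type) [Field K] (Q : QD) [Fintype Q.V] [∀ i j : Q.V, Fintype (Q.Ar i j)]
variable (n : ℕ) (PA : PathAlg K Q)
variable (basA : Module.Basis (Short Q n) K (TA K Q n PA))
variable (s : ℕ) [NeZero s] (w : ZMod s → Q.V) (x : ∀ i : ZMod s, Q.Ar (w i) (w (i + 1)))
variable (k : K)
variable (αm : TA K Q n PA →ₗ[K] TA K Q n PA →ₗ[K] Module.Dual K (TA K Q n PA))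
variable (t : ℕ) (pM : Fin t → QD.PathIn Q)
variable (T : Type) [Ring T] [Algebra K T]
variable (eT : T ≃ₗ[K] TA K Q n PA × Module.Dual K (TA K Q n PA))
variable (PB : PathAlg K (Qe Q t pM))
variable (Φm : PB.P →ₐ[K] T)

/-- if `n ≥ 3` and the vertex `h` is neither a sink nor a source of `Δ`,
then `card (𝒞_h / ≡) = 1`. -/
theorem stmt19
    [IsAlgClosed K]
    (hn : 2 ≤ n)
    (hdim : 1 < Module.finrank K (TA K Q n PA))
    (hconn : ∀ i j : Q.V,
      Relation.EqvGen (fun u v : Q.V => Nonempty (Q.Ar u v) ∨ Nonempty (Q.Ar v u)) i j)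
    (hcyc : ∀ (i : Q.V) (p : Q.Path i i), 0 < p.length → cls K Q n PA p = 0)
    (hbas : ∀ sp : Short Q n, basA sp = cls K Q n PA sp.1.2.2)
    (hs1 : n + 1 ≤ s) (hs2 : s ≤ 2 * n - 2)
    (hk : k ≠ 0)
    (hα : ∀ {i j l : Q.V} (a : Q.Path i j) (b : Q.Path j l),
      αm (cls K Q n PA a) (cls K Q n PA b) =
        k • ∑ r : ZMod s, aTerm K Q n PA basA s w x a b r)
    (hcoc : ∀ a b c : TA K Q n PA,
      dL K Q n PA a (αm b c) + αm a (b * c) = αm (a * b) c + dR K Q n PA (αm a b) c)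
    (hMlt : ∀ m : Fin t, (pM m).2.2.length < n)
    (hMli : LinearIndependent K fun m : Fin t => cls K Q n PA (pM m).2.2)
    (hMsp : Submodule.span K (Set.range fun m : Fin t => cls K Q n PA (pM m).2.2)
      = socA K Q n PA)
    (hTmul : ∀ u v : T, eT (u * v) = ((eT u).1 * (eT v).1,
      dL K Q n PA (eT u).1 (eT v).2 + dR K Q n PA (eT u).2 (eT v).1 + αm (eT u).1 (eT v).1))
    (hTone : eT 1 = (1, 0))
    (hΦnil : ∀ i : Q.V, Φm (PB.ι (QD.Path.nil (Q := Qe Q t pM) i))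
      = eT.symm (cls K Q n PA (QD.Path.nil i), 0))
    (hΦarr : ∀ {i j : Q.V} (a : Q.Ar i j),
      Φm (PB.ι (QD.Path.cons (Sum.inl a) (QD.Path.nil (Q := Qe Q t pM) j)))
      = eT.symm (cls K Q n PA (QD.Path.cons a (QD.Path.nil j)), 0))
    (hΦy : ∀ m : Fin t,
      Φm (PB.ι (QD.Path.cons (yArr Q t pM m) (QD.Path.nil (Q := Qe Q t pM) (pM m).1)))
      = eT.symm (0, coordP K Q n PA basA (pM m)))
    (hΦsurj : Function.Surjective Φm)
    (hn3 : 3 ≤ n) (h : Q.V)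
    (hnotsink : ∃ j : Q.V, Nonempty (Q.Ar h j))
    (hnotsource : ∃ j : Q.V, Nonempty (Q.Ar j h)) :
    NCh K Q t pM T PB Φm h = 1 := by
  classical
  obtain ⟨v₀, ⟨b₀⟩⟩ := hnotsink
  obtain ⟨u₀, ⟨a₀⟩⟩ := hnotsource
  -- basic multiplicativity of `cls`
  have cls_mul : ∀ {i j l : Q.V} (p : Q.Path i j) (q : Q.Path j l),
      cls K Q n PA p * cls K Q n PA q = cls K Q n PA (p.comp q) := by
    intro i j l p q
    unfold cls
    rw [← map_mul, PA.ι_comp]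
  have cls_ortho : ∀ {i j u v : Q.V} (p : Q.Path i j) (q : Q.Path u v), j ≠ u →
      cls K Q n PA p * cls K Q n PA q = 0 := by
    intro i j u v p q hj
    unfold cls
    rw [← map_mul, PA.ι_ortho p q hj, map_zero]
  have cls_long : ∀ {i j : Q.V} (p : Q.Path i j), n ≤ p.length → cls K Q n PA p = 0 := by
    intro i j p hl
    unfold cls
    have hrel : truncRel K Q n PA (PA.ι p) 0 := ⟨rfl, ⟨⟨i, j, p⟩, hl, rfl⟩⟩
    rw [RingQuot.mkAlgHom_rel K hrel, map_zero]
  have cls_eq_bas : ∀ {i j : Q.V} (p : Q.Path i j) (hl : p.length < n),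
      cls K Q n PA p = basA ⟨⟨i, j, p⟩, hl⟩ := by
    intro i j p hl
    exact (hbas ⟨⟨i, j, p⟩, hl⟩).symm
  have cls_short_ne : ∀ {i j : Q.V} (p : Q.Path i j), p.length < n → cls K Q n PA p ≠ 0 := by
    intro i j p hl
    rw [cls_eq_bas p hl]
    exact basA.ne_zero _
  -- multiplication of `eT.symm` pairs
  have symm_mul : ∀ p q : TA K Q n PA × Module.Dual K (TA K Q n PA),
      eT.symm p * eT.symm q =
        eT.symm (p.1 * q.1, dL K Q n PA p.1 q.2 + dR K Q n PA p.2 q.1 + αm p.1 q.1) := by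
    intro p q
    apply eT.injective
    rw [hTmul, eT.apply_symm_apply, eT.apply_symm_apply, eT.apply_symm_apply]
  -- image of an embedded path
  have phi_embed : ∀ {i j : Q.V} (p : Q.Path i j),
      ∃ f, Φm (PB.ι (embed Q t pM p)) = eT.symm (cls K Q n PA p, f) := by
    intro i j p
    induction p with
    | nil i => exact ⟨0, hΦnil i⟩
    | @cons i' j' k' a p ih =>
      obtain ⟨f, hf⟩ := ih
      have hsplit : Φm (PB.ι (embed Q t pM (QD.Path.cons a p))) =
          Φm (PB.ι (QD.Path.cons (Sum.inl a) (QD.Path.nil (Q := Qe Q t pM) j'))) *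
            Φm (PB.ι (embed Q t pM p)) := by
        rw [← map_mul, ← PB.ι_comp]
        rfl
      exact ⟨_, by
        rw [hsplit, hΦarr a, hf, symm_mul]
        rw [show (cls K Q n PA (QD.Path.cons a (QD.Path.nil _)), (0 : Module.Dual K (TA K Q n PA))).1 *
              (cls K Q n PA p, f).1 = cls K Q n PA (QD.Path.cons a p) from cls_mul _ _]⟩
  -- image of a single extra arrow
  have phi_y_single : ∀ (m : Fin t) {i j : Q.V} (h1 : (pM m).2.1 = i) (h2 : (pM m).1 = j),
      Φm (PB.ι (QD.Path.cons (Sum.inr ⟨m, h1, h2⟩ : (Qe Q t pM).Ar i j)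
          (QD.Path.nil (Q := Qe Q t pM) j)))
        = eT.symm (0, coordP K Q n PA basA (pM m)) := by
    intro m i j h1 h2
    subst h1
    subst h2
    exact hΦy m
  -- paths with at least one extra arrow have first component zero
  have phi_fst_zero : ∀ {i j : (Qe Q t pM).V} (P : (Qe Q t pM).Path i j),
      1 ≤ numY Q t pM P → (eT (Φm (PB.ι P))).1 = 0 := by
    intro i j P
    induction P with
    | nil => intro hy; simp [numY] at hy
    | @cons i' j' k' a P ih =>
      intro hy
      have hsplit : Φm (PB.ι (QD.Path.cons a P)) =
          Φm (PB.ι (QD.Path.cons a (QD.Path.nil (Q := Qe Q t pM) j'))) * Φm (PB.ι P) := by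
        rw [← map_mul, ← PB.ι_comp]
        rfl
      rcases a with a' | ⟨m, h1, h2⟩
      · have hy' : 1 ≤ numY Q t pM P := by rwa [numY_cons_inl] at hy
        rw [hsplit, hTmul]
        simp [ih hy']
      · rw [hsplit, hTmul, phi_y_single m h1 h2]
        simp
  -- paths with at least two extra arrows vanish
  have phi_two_y : ∀ {i j : (Qe Q t pM).V} (P : (Qe Q t pM).Path i j),
      2 ≤ numY Q t pM P → Φm (PB.ι P) = 0 := by
    intro i j P
    induction P with
    | nil => intro hy; simp [numY] at hy
    | @cons i' j' k' a P ih =>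
      intro hy
      have hsplit : Φm (PB.ι (QD.Path.cons a P)) =
          Φm (PB.ι (QD.Path.cons a (QD.Path.nil (Q := Qe Q t pM) j'))) * Φm (PB.ι P) := by
        rw [← map_mul, ← PB.ι_comp]
        rfl
      rcases a with a' | ⟨m, h1, h2⟩
      · have hy' : 2 ≤ numY Q t pM P := by rwa [numY_cons_inl] at hy
        rw [hsplit, ih hy', mul_zero]
      · have hy' : 1 ≤ numY Q t pM P := by
          rw [numY_cons_inr] at hy
          omega
        have hX : (eT (Φm (PB.ι (QD.Path.cons (Sum.inr ⟨m, h1, h2⟩ : (Qe Q t pM).Ar _ _)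
            (QD.Path.nil (Q := Qe Q t pM) _))))).1 = 0 := by
          rw [phi_y_single m h1 h2]; simp
        have hY := phi_fst_zero P hy'
        have h0 : eT (Φm (PB.ι (QD.Path.cons (Sum.inr ⟨m, h1, h2⟩ : (Qe Q t pM).Ar _ _)
            (QD.Path.nil (Q := Qe Q t pM) _))) * Φm (PB.ι P)) = 0 := by
          rw [hTmul, hX, hY]
          refine Prod.ext ?_ ?_
          · simp
          · show dL K Q n PA 0 _ + dR K Q n PA _ 0 + αm 0 0 = 0
            ext z
            simp [dL, dR]
        rw [hsplit]
        exact (LinearEquiv.map_eq_zero_iff eT).mp h0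
  -- `x A x = 0` for a single arrow `x`
  have xyx : ∀ {u w : Q.V} (c : Q.Ar u w) (z : TA K Q n PA),
      cls K Q n PA (QD.Path.cons c (QD.Path.nil w)) * z *
        cls K Q n PA (QD.Path.cons c (QD.Path.nil w)) = 0 := by
    intro u w c z
    have hmap : (LinearMap.mulRight K (cls K Q n PA (QD.Path.cons c (QD.Path.nil w)))).comp
        (LinearMap.mulLeft K (cls K Q n PA (QD.Path.cons c (QD.Path.nil w))))
        = (0 : TA K Q n PA →ₗ[K] TA K Q n PA) := by
      apply basA.ext
      intro sp
      obtain ⟨⟨i', j', π⟩, hπ⟩ := sp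
      simp only [LinearMap.comp_apply, LinearMap.mulLeft_apply, LinearMap.mulRight_apply,
        LinearMap.zero_apply]
      rw [hbas ⟨⟨i', j', π⟩, hπ⟩]
      by_cases h1 : w = i'
      · subst h1
        rw [cls_mul]
        by_cases h2 : j' = u
        · subst h2
          rw [hcyc _ _ (by simp [QD.Path.comp, QD.Path.length]), zero_mul]
        · exact cls_ortho _ _ h2
      · rw [cls_ortho _ _ h1, zero_mul]
    have hz := LinearMap.congr_fun hmap z
    simpa using hz
  have arrow_in_jrad : ∀ {u w : Q.V} (c : Q.Ar u w),
      cls K Q n PA (QD.Path.cons c (QD.Path.nil w)) ∈ JradA K Q n PA := by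
    intro u w c
    exact aux_niljac (fun y => xyx c y)
  -- radical elements have no component on trivial paths
  have nil_coord : ∀ {r : TA K Q n PA}, r ∈ JradA K Q n PA → ∀ (sp : Short Q n),
      sp.1.2.2.length = 0 → basA.repr r sp = 0 := by
    intro r hr sp h0
    obtain ⟨⟨i, j, π⟩, hπ⟩ := sp
    cases π with
    | cons a p => simp [QD.Path.length] at h0
    | nil =>
      by_contra hc
      have hee : cls K Q n PA (QD.Path.nil i) * cls K Q n PA (QD.Path.nil i)
          = cls K Q n PA (QD.Path.nil i) := cls_mul _ _
      have key : (LinearMap.mulLeft K (cls K Q n PA (QD.Path.nil i))).comp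
          (LinearMap.mulRight K (cls K Q n PA (QD.Path.nil i)))
          = (basA.coord ⟨⟨i, i, QD.Path.nil i⟩, hπ⟩).smulRight (cls K Q n PA (QD.Path.nil i)) := by
        apply basA.ext
        intro sq
        obtain ⟨⟨i', j', ρ⟩, hρ⟩ := sq
        simp only [LinearMap.comp_apply, LinearMap.mulLeft_apply, LinearMap.mulRight_apply,
          LinearMap.smulRight_apply, Module.Basis.coord_apply, Module.Basis.repr_self]
        rw [hbas ⟨⟨i', j', ρ⟩, hρ⟩, Finsupp.single_apply]
        by_cases h1 : i' = i
        · subst h1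
          by_cases h2 : j' = i'
          · subst h2
            cases ρ with
            | nil =>
              rw [if_pos (Subtype.ext rfl), cls_mul, cls_mul, one_smul]
              rfl
            | cons a ρ' =>
              rw [if_neg (by
                intro he
                have hlen0 := congrArg (fun z : Short Q n => z.1.2.2.length) he
                exact Nat.succ_ne_zero _ hlen0)]
              rw [hcyc _ (QD.Path.cons a ρ') (by simp [QD.Path.length]), zero_mul, mul_zero,
                zero_smul]
          · rw [if_neg (by
              intro he
              exact h2 (congrArg (fun z : Short Q n => z.1.2.1) he))]
            rw [cls_ortho _ _ h2, mul_zero, zero_smul]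
        · rw [if_neg (by
            intro he
            exact h1 (congrArg (fun z : Short Q n => z.1.1) he))]
          rw [← mul_assoc, cls_ortho _ _ (fun hh => h1 hh.symm), zero_mul, zero_smul]
      have key' := LinearMap.congr_fun key r
      simp only [LinearMap.comp_apply, LinearMap.mulLeft_apply, LinearMap.mulRight_apply,
        LinearMap.smulRight_apply, Module.Basis.coord_apply] at key'
      obtain ⟨z, hz⟩ := aux_qreg hr
        ((-((basA.repr r ⟨⟨i, i, QD.Path.nil i⟩, hπ⟩)⁻¹)) • cls K Q n PA (QD.Path.nil i))
      have hre : (((-((basA.repr r ⟨⟨i, i, QD.Path.nil i⟩, hπ⟩)⁻¹)) •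
          cls K Q n PA (QD.Path.nil i)) * r + 1) * cls K Q n PA (QD.Path.nil i) = 0 := by
        rw [add_mul, one_mul, smul_mul_assoc, smul_mul_assoc, mul_assoc, key', smul_smul,
          neg_mul, inv_mul_cancel₀ hc, neg_smul, one_smul, neg_add_cancel]
      have he0 : cls K Q n PA (QD.Path.nil i) = 0 := by
        calc cls K Q n PA (QD.Path.nil i) = 1 * cls K Q n PA (QD.Path.nil i) :=
              (one_mul _).symm
        _ = (z * (((-((basA.repr r ⟨⟨i, i, QD.Path.nil i⟩, hπ⟩)⁻¹)) •
              cls K Q n PA (QD.Path.nil i)) * r + 1)) * cls K Q n PA (QD.Path.nil i) := by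
              rw [hz]
        _ = z * ((((-((basA.repr r ⟨⟨i, i, QD.Path.nil i⟩, hπ⟩)⁻¹)) •
              cls K Q n PA (QD.Path.nil i)) * r + 1) * cls K Q n PA (QD.Path.nil i)) := by
              rw [mul_assoc]
        _ = 0 := by rw [hre, mul_zero]
      exact basA.ne_zero ⟨⟨i, i, QD.Path.nil i⟩, hπ⟩ ((hbas _).trans he0)
  -- the radical is spanned by positive-length paths
  have jrad_pos : ∀ {r : TA K Q n PA}, r ∈ JradA K Q n PA →
      r ∈ Submodule.span K {y : TA K Q n PA |
        ∃ (i j : Q.V) (p : Q.Path i j), 0 < p.length ∧ y = cls K Q n PA p} := by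
    intro r hr
    rw [← Module.Basis.linearCombination_repr basA r, Finsupp.linearCombination_apply]
    apply Submodule.sum_mem
    intro sp hsp
    beta_reduce
    by_cases h0 : sp.1.2.2.length = 0
    · rw [nil_coord hr sp h0, zero_smul]
      exact Submodule.zero_mem _
    · apply Submodule.smul_mem
      apply Submodule.subset_span
      exact ⟨sp.1.1, sp.1.2.1, sp.1.2.2, Nat.pos_of_ne_zero h0, hbas sp⟩
  -- standard nonzero cycles through `h`
  have sig_cycle : ∀ {u v : Q.V} (a : Q.Ar u h) (b : Q.Ar h v),
      ∃ C : (Qe Q t pM).Path h h, 0 < C.length ∧ Φm (PB.ι C) ≠ 0 ∧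
        QD.Path.arrowMem (Sum.inl a) C ∧ QD.Path.arrowMem (Sum.inl b) C := by
    intro u v a b
    set L : Set ℕ := {d | ∃ (i j : Q.V) (l : Q.Path i u) (r : Q.Path v j),
        (l.comp (QD.Path.cons a (QD.Path.cons b r))).length = d ∧ d < n} with hLdef
    have hmem2 : (2 : ℕ) ∈ L :=
      ⟨u, v, QD.Path.nil u, QD.Path.nil v, by simp [QD.Path.comp, QD.Path.length], by omega⟩
    have hbdd : BddAbove L := ⟨n, fun d hd => by obtain ⟨_, _, _, _, _, h2⟩ := hd; omega⟩
    obtain ⟨i, j, l, r, hlen, hltn⟩ := Nat.sSup_mem ⟨2, hmem2⟩ hbdd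
    set q : Q.Path i j := l.comp (QD.Path.cons a (QD.Path.cons b r)) with hqdef
    clear_value q
    have hqlt : q.length < n := by rw [hlen]; exact hltn
    have hmaxL : ∀ {i' : Q.V} (p : Q.Path i' i), 0 < p.length →
        cls K Q n PA (p.comp q) = 0 := by
      intro i' p hp
      by_contra hne
      have hlt' : (p.comp q).length < n := by
        by_contra hge
        exact hne (cls_long _ (le_of_not_gt hge))
      have hmem : (p.comp q).length ∈ L :=
        ⟨i', j, p.comp l, r, by rw [QD.Path.comp_assoc, ← hqdef], hlt'⟩
      have hle := le_csSup hbdd hmem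
      rw [QD.Path.length_comp, hlen] at hle
      omega
    have hmaxR : ∀ {j' : Q.V} (p : Q.Path j j'), 0 < p.length →
        cls K Q n PA (q.comp p) = 0 := by
      intro j' p hp
      by_contra hne
      have hlt' : (q.comp p).length < n := by
        by_contra hge
        exact hne (cls_long _ (le_of_not_gt hge))
      have hmem : (q.comp p).length ∈ L :=
        ⟨i, j', l, r.comp p, by rw [hqdef, QD.Path.comp_assoc]; rfl, hlt'⟩
      have hle := le_csSup hbdd hmem
      rw [QD.Path.length_comp, hlen] at hle
      omega
    have hqsoc : cls K Q n PA q ∈ socA K Q n PA := by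
      intro x hx
      have hx' := jrad_pos hx
      refine Submodule.span_induction ?_ ?_ ?_ ?_ hx'
      · rintro y ⟨i2, j2, p, hp, rfl⟩
        constructor
        · by_cases hcp : j2 = i
          · subst hcp
            rw [cls_mul]
            exact hmaxL p hp
          · exact cls_ortho _ _ hcp
        · by_cases hcp : j = i2
          · subst hcp
            rw [cls_mul]
            exact hmaxR p hp
          · exact cls_ortho _ _ hcp
      · simp
      · rintro y z - - ⟨hy1, hy2⟩ ⟨hz1, hz2⟩
        exact ⟨by rw [add_mul, hy1, hz1, add_zero], by rw [mul_add, hy2, hz2, add_zero]⟩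
      · rintro c y - ⟨hy1, hy2⟩
        exact ⟨by rw [smul_mul_assoc, hy1, smul_zero], by rw [mul_smul_comm, hy2, smul_zero]⟩
    rw [← hMsp] at hqsoc
    have hexm : ∃ m : Fin t, pM m = (⟨i, ⟨j, q⟩⟩ : QD.PathIn Q) := by
      by_contra hno
      have hno' : ∀ m : Fin t, pM m ≠ (⟨i, ⟨j, q⟩⟩ : QD.PathIn Q) := fun m hm => hno ⟨m, hm⟩
      have h1 : basA.coord ⟨⟨i, j, q⟩, hqlt⟩ (cls K Q n PA q) = 1 := by
        rw [cls_eq_bas q hqlt, Module.Basis.coord_apply, Module.Basis.repr_self, Finsupp.single_eq_same]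
      have h0 : basA.coord ⟨⟨i, j, q⟩, hqlt⟩ (cls K Q n PA q) = 0 := by
        have hker : Submodule.span K (Set.range fun m : Fin t => cls K Q n PA (pM m).2.2) ≤
            LinearMap.ker (basA.coord ⟨⟨i, j, q⟩, hqlt⟩) := by
          rw [Submodule.span_le]
          rintro y ⟨m, rfl⟩
          simp only [SetLike.mem_coe, LinearMap.mem_ker]
          show basA.coord ⟨⟨i, j, q⟩, hqlt⟩ (cls K Q n PA (pM m).2.2) = 0
          rw [show cls K Q n PA (pM m).2.2 = basA ⟨pM m, hMlt m⟩ from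
              (hbas ⟨pM m, hMlt m⟩).symm,
            Module.Basis.coord_apply, Module.Basis.repr_self, Finsupp.single_apply, if_neg]
          intro he
          exact hno' m (congrArg Subtype.val he)
        exact hker hqsoc
      rw [h1] at h0
      exact one_ne_zero h0
    obtain ⟨m, hm⟩ := hexm
    have hi : (pM m).1 = i := by rw [hm]
    subst hi
    have hj : (pM m).2.1 = j := by rw [hm]
    subst hj
    have hpq : (pM m).2.2 = q := by
      have hm' : (⟨(pM m).1, ⟨(pM m).2.1, (pM m).2.2⟩⟩ : QD.PathIn Q) =
          (⟨(pM m).1, ⟨(pM m).2.1, q⟩⟩ : QD.PathIn Q) := hm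
      simpa [Sigma.ext_iff, heq_eq_eq] using hm'
    refine ⟨(embed Q t pM (QD.Path.cons b r)).comp
        (QD.Path.cons (yArr Q t pM m)
          (embed Q t pM (l.comp (QD.Path.cons a (QD.Path.nil h))))), ?_, ?_, ?_, ?_⟩
    · rw [QD.Path.length_comp]
      simp [QD.Path.length]
    · -- nonvanishing
      have hδq : (l.comp (QD.Path.cons a (QD.Path.nil h))).comp (QD.Path.cons b r) = q := by
        rw [QD.Path.comp_assoc]
        exact hqdef.symm
      have hsig : (⟨(pM m).1, (pM m).2.1,
          (l.comp (QD.Path.cons a (QD.Path.nil h))).comp (QD.Path.cons b r)⟩ :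
            QD.PathIn Q) = pM m := by
        rw [hδq, ← hpq]
        rfl
      have hlen2 : ((l.comp (QD.Path.cons a (QD.Path.nil h))).comp
          (QD.Path.cons b r)).length < n := by
        rw [hδq]; exact hqlt
      obtain ⟨f2, hf2⟩ := phi_embed (QD.Path.cons b r)
      obtain ⟨f1, hf1⟩ := phi_embed (l.comp (QD.Path.cons a (QD.Path.nil h)))
      have hsplit : Φm (PB.ι ((embed Q t pM (QD.Path.cons b r)).comp
          (QD.Path.cons (yArr Q t pM m)
            (embed Q t pM (l.comp (QD.Path.cons a (QD.Path.nil h))))))) =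
          Φm (PB.ι (embed Q t pM (QD.Path.cons b r))) *
            (Φm (PB.ι (QD.Path.cons (yArr Q t pM m) (QD.Path.nil (Q := Qe Q t pM) _))) *
              Φm (PB.ι (embed Q t pM (l.comp (QD.Path.cons a (QD.Path.nil h)))))) := by
        rw [← map_mul, ← map_mul, ← PB.ι_comp, ← PB.ι_comp]
        rfl
      rw [hsplit, hΦy m, hf1, hf2, symm_mul, symm_mul]
      intro hC0
      rw [LinearEquiv.map_eq_zero_iff eT.symm] at hC0
      have h2 := congrArg Prod.snd hC0
      have h3 := LinearMap.congr_fun h2 (cls K Q n PA (QD.Path.nil h))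
      simp only [dL, dR, LinearMap.comp_apply, LinearMap.mulLeft_apply,
        LinearMap.mulRight_apply, LinearMap.add_apply, LinearMap.zero_apply, Prod.snd_zero,
        zero_mul, mul_zero, map_zero, add_zero, zero_add] at h3
      have e1 : cls K Q n PA (QD.Path.nil h) * cls K Q n PA (QD.Path.cons b r) =
          cls K Q n PA (QD.Path.cons b r) := cls_mul _ _
      rw [e1, cls_mul] at h3
      have hcoord : coordP K Q n PA basA (pM m) = basA.coord ⟨pM m, hMlt m⟩ := by
        unfold coordP
        exact dif_pos (hMlt m)
      rw [hcoord, cls_eq_bas _ hlen2, Module.Basis.coord_apply, Module.Basis.repr_self,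
        Finsupp.single_apply, if_pos (Subtype.ext hsig)] at h3
      exact one_ne_zero h3
    · -- membership of `a`
      apply QD.Path.arrowMem_comp_right
      refine Or.inr ?_
      rw [embed_comp]
      exact QD.Path.arrowMem_comp_right _ _ _ (Or.inl rfl)
    · -- membership of `b`
      apply QD.Path.arrowMem_comp_left
      exact Or.inl rfl
  -- no socle path has both endpoints at a non-sink vertex
  have no_loop_pm : ∀ (m : Fin t) (v v' : Q.V), (pM m).2.1 = v → (pM m).1 = v →
      Q.Ar v v' → False := by
    intro m v v' hm1 hm2 barr
    rcases hP : pM m with ⟨P1, P2, π⟩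
    have hP1 : P1 = v := by rw [hP] at hm2; exact hm2
    have hP2 : P2 = v := by rw [hP] at hm1; exact hm1
    have hπlt : π.length < n := by
      have hl := hMlt m
      rw [hP] at hl
      exact hl
    cases π with
    | cons c π' =>
      subst hP1
      subst hP2
      exact cls_short_ne _ hπlt (hcyc _ _ (by simp [QD.Path.length]))
    | nil =>
      subst hP1
      have hsoc : cls K Q n PA (QD.Path.nil P1) ∈ socA K Q n PA := by
        rw [← hMsp]
        refine Submodule.subset_span ⟨m, ?_⟩
        show cls K Q n PA (pM m).2.2 = cls K Q n PA (QD.Path.nil P1)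
        rw [hP]
      have h0s := (hsoc _ (arrow_in_jrad barr)).2
      rw [cls_mul] at h0s
      exact cls_short_ne _ (by simp [QD.Path.comp, QD.Path.length]; omega) h0s
  -- every nonzero cycle contains an ordinary arrow adjacent to `h`
  have mprime : ∀ {i j : (Qe Q t pM).V} (C : (Qe Q t pM).Path i j), i = h → j = h →
      0 < C.length → Φm (PB.ι C) ≠ 0 →
      (∃ (u : Q.V) (a : Q.Ar u h), QD.Path.arrowMem (Sum.inl a) C) ∨
      (∃ (v : Q.V) (b : Q.Ar h v), QD.Path.arrowMem (Sum.inl b) C) := by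
    intro i j C hi hj hpos hphi
    cases C with
    | nil => simp [QD.Path.length] at hpos
    | cons e C₀ =>
      subst hi
      subst hj
      rcases e with b | ⟨m, hm1, hm2⟩
      · right
        exact ⟨_, b, Or.inl rfl⟩
      · rcases Nat.eq_zero_or_pos C₀.length with h0 | hposC₀
        · exfalso
          have hw := QD.Path.eq_of_length_zero C₀ h0
          exact no_loop_pm m _ _ hm1 (hm2.trans hw) b₀
        · obtain ⟨u, g, C₂, hdec⟩ := QD.Path.exists_last C₀ hposC₀
          rcases g with a | ⟨m', hg1, hg2⟩
          · left
            refine ⟨u, a, Or.inr ?_⟩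
            rw [hdec]
            exact QD.Path.arrowMem_comp_right _ _ _ (Or.inl rfl)
          · exfalso
            apply hphi
            apply phi_two_y
            rw [numY_cons_inr]
            have h2 : 1 ≤ numY Q t pM C₀ := by
              rw [hdec, numY_comp, numY_cons_inr]
              omega
            omega
  -- assemble
  obtain ⟨C00, hC01, hC02, hCa, hCb⟩ := sig_cycle a₀ b₀
  set c0 : Ch K Q t pM T PB Φm h := ⟨C00, hC01, hC02⟩ with hc0def
  have hall : ∀ c : Ch K Q t pM T PB Φm h,
      Quot.mk (Rc K Q t pM T PB Φm h) c = Quot.mk (Rc K Q t pM T PB Φm h) c0 := by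
    intro c
    obtain ⟨C, hCpos, hCphi⟩ := c
    rcases mprime C rfl rfl hCpos hCphi with ⟨u, a, hmem⟩ | ⟨v, b, hmem⟩
    · obtain ⟨C1, h1len, h1phi, h1a, h1b⟩ := sig_cycle a b₀
      have r1 : Rc K Q t pM T PB Φm h ⟨C, hCpos, hCphi⟩ ⟨C1, h1len, h1phi⟩ :=
        ⟨u, h, Sum.inl a, Or.inr rfl, hmem, h1a⟩
      have r2 : Rc K Q t pM T PB Φm h ⟨C1, h1len, h1phi⟩ c0 :=
        ⟨h, v₀, Sum.inl b₀, Or.inl rfl, h1b, hCb⟩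
      exact (Quot.sound r1).trans (Quot.sound r2)
    · obtain ⟨C1, h1len, h1phi, h1a, h1b⟩ := sig_cycle a₀ b
      have r1 : Rc K Q t pM T PB Φm h ⟨C, hCpos, hCphi⟩ ⟨C1, h1len, h1phi⟩ :=
        ⟨h, v, Sum.inl b, Or.inl rfl, hmem, h1b⟩
      have r2 : Rc K Q t pM T PB Φm h ⟨C1, h1len, h1phi⟩ c0 :=
        ⟨u₀, h, Sum.inl a₀, Or.inr rfl, h1a, hCa⟩
      exact (Quot.sound r1).trans (Quot.sound r2)
  have hsub : ∀ x y : Quot (Rc K Q t pM T PB Φm h), x = y := by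
    intro x y
    obtain ⟨cx, rfl⟩ := Quot.exists_rep x
    obtain ⟨cy, rfl⟩ := Quot.exists_rep y
    rw [hall cx, hall cy]
  unfold NCh
  rw [Nat.card_eq_one_iff_unique]
  exact ⟨⟨hsub⟩, ⟨Quot.mk _ c0⟩⟩

end Statements
end
end
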